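/- arXiv:1105.0889 — 12 statements merged into one kernel-verified Lean document; each statement's English description precedes it below -/
import Mathlib

section
/- Let {ξ_l} be i.i.d. real random variables with density proportional to exp(-|x|^q/2), q ≥ 1, and let u_l = l^{-(s/d + 1/2 - 1/q)} κ^{-1/q} ξ_l for s > 0, κ > 0, d ≥ 1. Then for t < s - d/q, the series ∑_l l^{(tq/d + q/2 - 1)} |u_l|^q converges almost surely. -/
/-!
Each summand equals `l ^ (-(s - t) q / d) · |κ ^ (-1/q)| ^ q · |ξ_l| ^ q`. The `ξ_l` share
one law, whose density `∝ exp (-|x| ^ q / 2)` has a finite `q`-th absolute moment, so by monotone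
convergence the expectation of the series is a constant times `∑ l ^ (-(s - t) q / d)`. That
p-series converges exactly when `(s - t) q / d > 1`, i.e. `t < s - d / q`, and a series of
nonnegative terms with finite expectation converges almost surely.
-/

open MeasureTheory Real ProbabilityTheory

open Set in
theorem integrable_comp_abs_of_integrableOn_Ioi {f : ℝ → ℝ} (hf : IntegrableOn f (Ioi 0)) :
    Integrable fun x => f |x| := by
  have hIoi : IntegrableOn (fun x => f |x|) (Ioi 0) :=
    hf.congr_fun (fun x hx => by rw [abs_of_pos hx]) measurableSet_Ioi
  have hIic : IntegrableOn (fun x => f |x|) (Iic 0) := by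
    have hIci : IntegrableOn (fun x => f |x|) (Ici (-0)) := by
      rw [neg_zero, integrableOn_Ici_iff_integrableOn_Ioi]
      exact hIoi
    simpa only [abs_neg] using hIci.comp_neg_Iic
  rw [← integrableOn_univ, ← Iic_union_Ioi (a := 0), integrableOn_union]
  exact ⟨hIic, hIoi⟩

theorem integrable_abs_rpow_mul_exp_neg_mul_abs_rpow {p q b : ℝ} (hp : -1 < p) (hq : 0 < q)
    (hb : 0 < b) : Integrable fun x : ℝ => |x| ^ p * exp (-b * |x| ^ q) :=
  integrable_comp_abs_of_integrableOn_Ioi (integrableOn_rpow_mul_exp_neg_mul_rpow hp hq hb)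

theorem lintegral_ofReal_abs_rpow_ne_top_of_map_eq_withDensity {Ω : Type*}
    [MeasurableSpace Ω] {P : Measure Ω} {X : Ω → ℝ} (hX : AEMeasurable X P) {p q c : ℝ}
    (hp : -1 < p) (hq : 0 < q)
    (hmap : P.map X = volume.withDensity fun x => ENNReal.ofReal (c * exp (-(|x| ^ q) / 2))) :
    ∫⁻ ω, ENNReal.ofReal (|X ω| ^ p) ∂P ≠ ⊤ := by
  have hpow : Measurable fun x : ℝ => ENNReal.ofReal (|x| ^ p) := by fun_prop
  rw [← lintegral_map' hpow.aemeasurable hX, hmap,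
    lintegral_withDensity_eq_lintegral_mul₀ (by fun_prop) hpow.aemeasurable]
  have hint := ((integrable_abs_rpow_mul_exp_neg_mul_abs_rpow hp hq one_half_pos).const_mul c)
    |>.lintegral_lt_top
  refine ne_of_lt (lt_of_eq_of_lt (lintegral_congr fun x => ?_) hint)
  rw [Pi.mul_apply, ← ENNReal.ofReal_mul' (by positivity)]
  ring_nf

theorem ae_summable_of_tsum_lintegral_ne_top {Ω : Type*} [MeasurableSpace Ω] {μ : Measure Ω}
    {f : ℕ → Ω → ℝ} (hf_nonneg : ∀ n ω, 0 ≤ f n ω) (hf : ∀ n, AEMeasurable (f n) μ)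
    (hsum : ∑' n, ∫⁻ ω, ENNReal.ofReal (f n ω) ∂μ ≠ ⊤) :
    ∀ᵐ ω ∂μ, Summable fun n => f n ω := by
  have hmeas n : AEMeasurable (fun ω => ENNReal.ofReal (f n ω)) μ := (hf n).ennreal_ofReal
  rw [← lintegral_tsum hmeas] at hsum
  filter_upwards [ae_lt_top' (AEMeasurable.tsum hmeas) hsum] with ω hω
  simpa only [ENNReal.toReal_ofReal (hf_nonneg _ ω)] using ENNReal.summable_toReal hω.ne

theorem ae_summable_mul_of_lintegral_le {Ω : Type*} [MeasurableSpace Ω] {μ : Measure Ω}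
    {a : ℕ → ℝ} {g : ℕ → Ω → ℝ} {K : ENNReal} (ha : Summable a) (ha_nonneg : ∀ n, 0 ≤ a n)
    (hg_nonneg : ∀ n ω, 0 ≤ g n ω) (hg : ∀ n, AEMeasurable (g n) μ)
    (hK : ∀ n, ∫⁻ ω, ENNReal.ofReal (g n ω) ∂μ ≤ K) (hK_top : K ≠ ⊤) :
    ∀ᵐ ω ∂μ, Summable fun n => a n * g n ω := by
  have hterm n : ∫⁻ ω, ENNReal.ofReal (a n * g n ω) ∂μ ≤ ENNReal.ofReal (a n) * K := by
    simp_rw [ENNReal.ofReal_mul (ha_nonneg n)]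
    rw [lintegral_const_mul'' _ (hg n).ennreal_ofReal]
    gcongr
    exact hK n
  have hsum_a : ∑' n, ENNReal.ofReal (a n) ≠ ⊤ := by
    rw [← ENNReal.ofReal_tsum_of_nonneg ha_nonneg ha]
    exact ENNReal.ofReal_ne_top
  have hsum : ∑' n, ∫⁻ ω, ENNReal.ofReal (a n * g n ω) ∂μ ≠ ⊤ := by
    refine ne_top_of_le_ne_top ?_ (ENNReal.tsum_le_tsum hterm)
    rw [ENNReal.tsum_mul_right]
    exact ENNReal.mul_ne_top hsum_a hK_top
  exact ae_summable_of_tsum_lintegral_ne_top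
    (fun n ω => mul_nonneg (ha_nonneg n) (hg_nonneg n ω)) (fun n => (hg n).const_mul _) hsum

theorem summable_nat_add_one_rpow {p : ℝ} :
    Summable (fun n : ℕ => ((n : ℝ) + 1) ^ p) ↔ p < -1 := by
  rw [← Real.summable_nat_rpow, ← summable_nat_add_iff 1 (f := fun n : ℕ => (n : ℝ) ^ p)]
  simp only [Nat.cast_add, Nat.cast_one]

theorem rpow_mul_abs_rpow_mul_mul_rpow {N : ℝ} (hN : 0 < N) (a b C x q : ℝ) :
    N ^ a * |N ^ b * C * x| ^ q = N ^ (a + b * q) * |C| ^ q * |x| ^ q := by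
  rw [abs_mul, abs_mul, abs_of_pos (rpow_pos_of_pos hN b),
    mul_rpow (by positivity) (abs_nonneg x), mul_rpow (by positivity) (abs_nonneg C),
    ← rpow_mul hN.le, rpow_add hN]
  ring

theorem besov_norm_summable_as_general
    {Ω : Type*} [MeasurableSpace Ω] (P : Measure Ω)
    (q s t κ : ℝ) (d : ℕ) (hd : 1 ≤ d) (hq : 1 ≤ q)
    (ht : t < s - (d : ℝ) / q)
    (c : ℝ)
    (ξ : ℕ → Ω → ℝ) (hmeas : ∀ l, Measurable (ξ l))
    (hdens : ∀ l, Measure.map (ξ l) P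
      = volume.withDensity (fun x => ENNReal.ofReal (c * Real.exp (-(|x| ^ q) / 2)))) :
    ∀ᵐ ω ∂P, Summable (fun n : ℕ =>
      ((n : ℝ) + 1) ^ (t * q / (d : ℝ) + q / 2 - 1) *
        |((n : ℝ) + 1) ^ (-(s / (d : ℝ) + 1 / 2 - 1 / q)) * κ ^ (-(1 / q)) * ξ n ω| ^ q) := by
  have hq0 : 0 < q := by linarith
  have hd0 : (0 : ℝ) < d := Nat.cast_pos.mpr (by omega)
  have hexp : t * q / d + q / 2 - 1 + -(s / d + 1 / 2 - 1 / q) * q < -1 := by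
    have hdq : (d : ℝ) < (s - t) * q := (div_lt_iff₀ hq0).mp (by linarith)
    rw [show t * q / d + q / 2 - 1 + -(s / d + 1 / 2 - 1 / q) * q = (t - s) * q / d by
      field_simp; ring, div_lt_iff₀ hd0]
    linarith
  have hident n : IdentDistrib (ξ n) (ξ 0) P P :=
    ⟨(hmeas n).aemeasurable, (hmeas 0).aemeasurable, by rw [hdens, hdens]⟩
  have hmoment : ∫⁻ ω, ENNReal.ofReal (|ξ 0 ω| ^ q) ∂P ≠ ⊤ :=
    lintegral_ofReal_abs_rpow_ne_top_of_map_eq_withDensity (hmeas 0).aemeasurable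
      (by linarith) hq0 (hdens 0)
  have hsum := ae_summable_mul_of_lintegral_le
    ((summable_nat_add_one_rpow.mpr hexp).mul_right (|κ ^ (-(1 / q))| ^ q))
    (fun n => by positivity) (fun n ω => by positivity) (fun n => by fun_prop)
    (fun n => ((hident n).comp (by fun_prop :
      Measurable fun x : ℝ => ENNReal.ofReal (|x| ^ q))).lintegral_eq.le) hmoment
  filter_upwards [hsum] with ω hω
  simpa only [rpow_mul_abs_rpow_mul_mul_rpow (Nat.cast_add_one_pos _)] using hω

/-- for i.i.d. ξ_l with density ∝ exp(-|x|^q/2) and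
u_l = l^{-(s/d+1/2-1/q)} κ^{-1/q} ξ_l, if t < s - d/q then
∑_l l^{(tq/d+q/2-1)} |u_l|^q converges almost surely.  (Indices l = n+1, n : ℕ.) -/
theorem besov_norm_summable_as
    {Ω : Type*} [MeasurableSpace Ω] (P : Measure Ω) [IsProbabilityMeasure P]
    (q s t κ : ℝ) (d : ℕ) (hd : 1 ≤ d) (hq : 1 ≤ q) (hs : 0 < s) (hκ : 0 < κ)
    (ht : t < s - (d : ℝ) / q)
    (c : ℝ) (hc : 0 < c)
    (ξ : ℕ → Ω → ℝ) (hmeas : ∀ l, Measurable (ξ l))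
    (hindep : iIndepFun ξ P)
    (hdens : ∀ l, Measure.map (ξ l) P
      = volume.withDensity (fun x => ENNReal.ofReal (c * Real.exp (-(|x| ^ q) / 2)))) :
    ∀ᵐ ω ∂P, Summable (fun n : ℕ =>
      ((n : ℝ) + 1) ^ (t * q / (d : ℝ) + q / 2 - 1) *
        |((n : ℝ) + 1) ^ (-(s / (d : ℝ) + 1 / 2 - 1 / q)) * κ ^ (-(1 / q)) * ξ n ω| ^ q) :=
  besov_norm_summable_as_general P q s t κ d hd hq ht c ξ hmeas hdens
end

section
/- With u a draw from a (κ, X^{s,q}) measure (coefficients u_l = l^{-(s/d+1/2-1/q)} κ^{-1/q} ξ_l with ξ_l i.i.d. with density ∝ exp(-|x|^q/2)), for any t < s - d/q and any α ∈ (0, κ/2), one has E[exp(α ‖u‖_{X^{t,q}}^q)] < ∞. -/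
/-!
Up to the factor `κ⁻¹`, the weights of `X^{t,q}` turn the exponent into `∑ βₙ |ξₙ|^q` with
`βₙ = (α/κ) (n+1)^{-(s-t)q/d}`: summable since `(s-t)q/d > 1`, and bounded by `b = α/κ < 1/2`.
By monotone convergence and independence, `E exp (∑ βₙ |ξₙ|^q) ≤ ∏ₙ E exp (βₙ |ξₙ|^q)`, and
`eˣ - 1 ≤ x eˣ` bounds each factor by `1 + βₙ C ≤ exp (βₙ C)`, where `C = E [|ξ|^q exp (b |ξ|^q)]`
is finite because the density `exp (-|x|^q / 2)` beats `exp (b |x|^q)`. So the expectation is at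
most `exp (C ∑ βₙ)`.
-/

open MeasureTheory ProbabilityTheory Real
open scoped ENNReal NNReal

lemma Real.exp_mul_le_one_add_mul_mul_exp {β b y : ℝ} (hβ : 0 ≤ β) (hβb : β ≤ b) (hy : 0 ≤ y) :
    exp (β * y) ≤ 1 + β * (y * exp (b * y)) := by
  have hsub : exp (β * y) - 1 ≤ β * y * exp (β * y) := by
    have h := add_one_le_exp (-(β * y))
    have hinv : exp (-(β * y)) * exp (β * y) = 1 := by rw [← exp_add, neg_add_cancel, exp_zero]
    nlinarith [exp_pos (β * y)]
  have hmono : exp (β * y) ≤ exp (b * y) := exp_le_exp.2 (mul_le_mul_of_nonneg_right hβb hy)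
  nlinarith [mul_nonneg hβ hy]

lemma rpow_mul_abs_besov_coeff_rpow {q s t κ d x : ℝ} (hq : q ≠ 0) (hκ : 0 ≤ κ) (hx : 0 < x)
    (z : ℝ) :
    x ^ (t * q / d + q / 2 - 1) * |x ^ (-(s / d + 1 / 2 - 1 / q)) * κ ^ (-(1 / q)) * z| ^ q
      = κ⁻¹ * x ^ (-((s - t) * q / d)) * |z| ^ q := by
  have hκq : κ ^ (-(1 / q) * q) = κ⁻¹ := by
    rw [show -(1 / q) * q = -1 by field_simp, rpow_neg_one]
  have hxq : x ^ (t * q / d + q / 2 - 1) * x ^ (-(s / d + 1 / 2 - 1 / q) * q)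
      = x ^ (-((s - t) * q / d)) := by
    rw [← rpow_add hx]
    congr 1
    field_simp
    ring
  rw [abs_mul, abs_mul, abs_of_pos (rpow_pos_of_pos hx _), abs_of_nonneg (rpow_nonneg hκ _),
    mul_rpow (by positivity) (abs_nonneg z), mul_rpow (by positivity) (by positivity),
    ← rpow_mul hx.le, ← rpow_mul hκ, hκq, ← hxq]
  ring

lemma summable_nat_add_one_rpow_neg {r : ℝ} (hr : 1 < r) :
    Summable fun n : ℕ => ((n : ℝ) + 1) ^ (-r) := by
  exact_mod_cast (summable_nat_add_iff 1).2 (summable_nat_rpow.2 (by linarith : -r < -1))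

-- No summability is needed: otherwise `∑'` is `0`, and the `N = 0` term is `1`.
lemma ENNReal.ofReal_exp_tsum_le_iSup_prod (h : ℕ → ℝ) :
    ENNReal.ofReal (exp (∑' n, h n))
      ≤ ⨆ N, ∏ n ∈ Finset.range N, ENNReal.ofReal (exp (h n)) := by
  simp only [← ENNReal.ofReal_prod_of_nonneg fun n _ => (exp_pos (h n)).le, ← exp_sum]
  by_cases hs : Summable h
  · exact le_of_tendsto' ((ENNReal.continuous_ofReal.comp Real.continuous_exp).tendsto _
      |>.comp hs.hasSum.tendsto_sum_nat) fun N => le_iSup (fun N => _) N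
  · rw [tsum_eq_zero_of_not_summable hs]
    exact le_iSup_of_le 0 (by simp)

lemma integrable_rpow_abs_mul_exp_neg_mul_rpow_abs {q b : ℝ} (hq : 0 < q) (hb : 0 < b) :
    Integrable fun x : ℝ => |x| ^ q * exp (-b * |x| ^ q) := by
  have hIoi : IntegrableOn (fun x : ℝ => |x| ^ q * exp (-b * |x| ^ q)) (Set.Ioi 0) :=
    (integrableOn_rpow_mul_exp_neg_mul_rpow (s := q) (by linarith) hq hb).congr_fun
      (fun x hx => by simp [abs_of_pos (Set.mem_Ioi.mp hx)]) measurableSet_Ioi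
  rw [← integrableOn_univ, ← Set.Iio_union_Ici (a := (0 : ℝ)), integrableOn_union,
    integrableOn_Ici_iff_integrableOn_Ioi]
  refine ⟨?_, hIoi⟩
  rw [← (Measure.measurePreserving_neg (volume : Measure ℝ)).integrableOn_comp_preimage
      (Homeomorph.neg ℝ).measurableEmbedding]
  simpa only [Function.comp_def, abs_neg, Set.neg_preimage, Set.neg_Iio, neg_zero] using hIoi

lemma lintegral_rpow_abs_mul_exp_eq_of_map_eq_withDensity {Ω : Type*} [MeasurableSpace Ω]
    {μ : Measure Ω} {X : Ω → ℝ} (hX : Measurable X) {q c b : ℝ}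
    (hlaw : μ.map X = volume.withDensity fun x => ENNReal.ofReal (c * exp (-(|x| ^ q) / 2))) :
    ∫⁻ ω, ENNReal.ofReal (|X ω| ^ q * exp (b * |X ω| ^ q)) ∂μ
      = ∫⁻ x, ENNReal.ofReal (c * (|x| ^ q * exp (-(1 / 2 - b) * |x| ^ q))) := by
  have hg : Measurable fun x : ℝ => ENNReal.ofReal (|x| ^ q * exp (b * |x| ^ q)) := by
    fun_prop
  rw [← lintegral_map hg hX, hlaw, lintegral_withDensity_eq_lintegral_mul _ (by fun_prop) hg]
  refine lintegral_congr fun x => ?_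
  rw [Pi.mul_apply, ← ENNReal.ofReal_mul' (by positivity)]
  congr 1
  have hexp : exp (-(|x| ^ q) / 2) * exp (b * |x| ^ q) = exp (-(1 / 2 - b) * |x| ^ q) := by
    rw [← exp_add]; ring_nf
  linear_combination c * |x| ^ q * hexp

section Independent

variable {Ω : Type*} [MeasurableSpace Ω] {P : Measure Ω}

lemma lintegral_ofReal_exp_mul_le [IsProbabilityMeasure P] {Y : Ω → ℝ} (hY : Measurable Y)
    (hY0 : ∀ ω, 0 ≤ Y ω) {β b : ℝ} {C : ℝ≥0} (hβ : 0 ≤ β) (hβb : β ≤ b)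
    (hC : ∫⁻ ω, ENNReal.ofReal (Y ω * exp (b * Y ω)) ∂P ≤ C) :
    ∫⁻ ω, ENNReal.ofReal (exp (β * Y ω)) ∂P ≤ ENNReal.ofReal (exp (β * C)) :=
  calc ∫⁻ ω, ENNReal.ofReal (exp (β * Y ω)) ∂P
      ≤ ∫⁻ ω, (1 + ENNReal.ofReal β * ENNReal.ofReal (Y ω * exp (b * Y ω))) ∂P := by
        refine lintegral_mono fun ω => ?_
        have hYω := hY0 ω
        rw [← ENNReal.ofReal_mul hβ, ← ENNReal.ofReal_one,
          ← ENNReal.ofReal_add zero_le_one (by positivity)]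
        exact ENNReal.ofReal_le_ofReal (exp_mul_le_one_add_mul_mul_exp hβ hβb hYω)
    _ = 1 + ENNReal.ofReal β * ∫⁻ ω, ENNReal.ofReal (Y ω * exp (b * Y ω)) ∂P := by
        rw [lintegral_add_left measurable_const, lintegral_const, measure_univ, mul_one,
          lintegral_const_mul _ (by fun_prop)]
    _ ≤ 1 + ENNReal.ofReal β * C := by gcongr
    _ = ENNReal.ofReal (1 + β * C) := by
        rw [← ENNReal.ofReal_coe_nnreal, ← ENNReal.ofReal_mul hβ, ← ENNReal.ofReal_one,
          ← ENNReal.ofReal_add zero_le_one (mul_nonneg hβ C.coe_nonneg)]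
    _ ≤ ENNReal.ofReal (exp (β * C)) := by
        gcongr; linarith [add_one_le_exp (β * C)]

lemma lintegral_ofReal_exp_tsum_mul_le {Y : ℕ → Ω → ℝ} (hY : ∀ n, Measurable (Y n))
    (hY0 : ∀ n ω, 0 ≤ Y n ω) (hindep : iIndepFun Y P) {β : ℕ → ℝ} {b : ℝ} {C : ℝ≥0}
    (hβ0 : ∀ n, 0 ≤ β n) (hβb : ∀ n, β n ≤ b) (hβ : Summable β)
    (hC : ∀ n, ∫⁻ ω, ENNReal.ofReal (Y n ω * exp (b * Y n ω)) ∂P ≤ C) :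
    ∫⁻ ω, ENNReal.ofReal (exp (∑' n, β n * Y n ω)) ∂P ≤ ENNReal.ofReal (exp (C * ∑' n, β n)) := by
  have := hindep.isProbabilityMeasure
  set η : ℕ → Ω → ℝ≥0∞ := fun n ω => ENNReal.ofReal (exp (β n * Y n ω))
  have hη : ∀ n, Measurable (η n) := fun n => by fun_prop
  have hηindep : iIndepFun η P :=
    hindep.comp (fun n y => ENNReal.ofReal (exp (β n * y))) fun n => by fun_prop
  have hpartial : ∀ N, ∫⁻ ω, ∏ n ∈ Finset.range N, η n ω ∂P
      ≤ ENNReal.ofReal (exp (C * ∑' n, β n)) := fun N =>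
    calc ∫⁻ ω, ∏ n ∈ Finset.range N, η n ω ∂P = ∏ n ∈ Finset.range N, ∫⁻ ω, η n ω ∂P :=
          lintegral_prod_eq_prod_lintegral_of_indepFun _ η hηindep hη
      _ ≤ ∏ n ∈ Finset.range N, ENNReal.ofReal (exp (β n * C)) :=
          Finset.prod_le_prod' fun n _ =>
            lintegral_ofReal_exp_mul_le (hY n) (hY0 n) (hβ0 n) (hβb n) (hC n)
      _ = ENNReal.ofReal (exp (C * ∑ n ∈ Finset.range N, β n)) := by
          rw [← ENNReal.ofReal_prod_of_nonneg fun n _ => (exp_pos _).le, ← exp_sum,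
            Finset.mul_sum]
          simp only [mul_comm]
      _ ≤ ENNReal.ofReal (exp (C * ∑' n, β n)) := by
          gcongr; exact hβ.sum_le_tsum _ fun n _ => hβ0 n
  have hmono : Monotone fun N ω => ∏ n ∈ Finset.range N, η n ω := fun N M hNM ω =>
    Finset.prod_le_prod_of_subset_of_one_le' (Finset.range_subset_range.2 hNM) fun n _ _ =>
      ENNReal.one_le_ofReal.2 (one_le_exp (mul_nonneg (hβ0 n) (hY0 n ω)))
  calc ∫⁻ ω, ENNReal.ofReal (exp (∑' n, β n * Y n ω)) ∂P
      ≤ ∫⁻ ω, ⨆ N, ∏ n ∈ Finset.range N, η n ω ∂P :=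
        lintegral_mono fun ω => ENNReal.ofReal_exp_tsum_le_iSup_prod _
    _ = ⨆ N, ∫⁻ ω, ∏ n ∈ Finset.range N, η n ω ∂P :=
        lintegral_iSup (fun N => Finset.measurable_prod _ fun n _ => hη n) hmono
    _ ≤ _ := iSup_le hpartial

lemma integrable_exp_tsum_mul {Y : ℕ → Ω → ℝ} (hY : ∀ n, Measurable (Y n))
    (hY0 : ∀ n ω, 0 ≤ Y n ω) (hindep : iIndepFun Y P) {β : ℕ → ℝ} {b : ℝ} {C : ℝ≥0}
    (hβ0 : ∀ n, 0 ≤ β n) (hβb : ∀ n, β n ≤ b) (hβ : Summable β)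
    (hC : ∀ n, ∫⁻ ω, ENNReal.ofReal (Y n ω * exp (b * Y n ω)) ∂P ≤ C) :
    Integrable (fun ω => exp (∑' n, β n * Y n ω)) P := by
  refine ⟨(Measurable.tsum fun n => (hY n).const_mul (β n)).exp.aestronglyMeasurable, ?_⟩
  rw [hasFiniteIntegral_iff_ofReal (Filter.Eventually.of_forall fun ω => (exp_pos _).le)]
  exact (lintegral_ofReal_exp_tsum_mul_le hY hY0 hindep hβ0 hβb hβ hC).trans_lt
    ENNReal.ofReal_lt_top

end Independent

theorem besov_exp_moment_finite_general
    {Ω : Type*} [MeasurableSpace Ω] (P : Measure Ω) [IsProbabilityMeasure P]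
    (q s t κ : ℝ) (d : ℕ) (hd : 1 ≤ d) (hq : 1 ≤ q) (hκ : 0 < κ)
    (ht : t < s - (d : ℝ) / q)
    (c : ℝ)
    (ξ : ℕ → Ω → ℝ) (hmeas : ∀ l, Measurable (ξ l))
    (hindep : iIndepFun ξ P)
    (hdens : ∀ l, Measure.map (ξ l) P
      = volume.withDensity (fun x => ENNReal.ofReal (c * Real.exp (-(|x| ^ q) / 2))))
    (α : ℝ) (hα0 : 0 < α) (hα : α < κ / 2) :
    Integrable (fun ω => Real.exp (α * ∑' n : ℕ,
      ((n : ℝ) + 1) ^ (t * q / (d : ℝ) + q / 2 - 1) *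
        |((n : ℝ) + 1) ^ (-(s / (d : ℝ) + 1 / 2 - 1 / q)) * κ ^ (-(1 / q)) * ξ n ω| ^ q)) P := by
  have hq0 : 0 < q := by linarith
  set r := (s - t) * q / d
  have hr : 1 < r := by
    rw [lt_div_iff₀ (by exact_mod_cast hd), one_mul]
    exact (div_lt_iff₀ hq0).1 (by linarith)
  set β : ℕ → ℝ := fun n => α / κ * ((n : ℝ) + 1) ^ (-r)
  have hβ0 : ∀ n, 0 ≤ β n := fun n => by positivity
  have hβb : ∀ n, β n ≤ α / κ := fun n => mul_le_of_le_one_right (by positivity)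
    (rpow_le_one_of_one_le_of_nonpos (by simp) (by linarith))
  have hβ : Summable β := (summable_nat_add_one_rpow_neg hr).mul_left _
  set C : ℝ≥0∞ := ∫⁻ x, ENNReal.ofReal (c * (|x| ^ q * exp (-(1 / 2 - α / κ) * |x| ^ q)))
  have hC : C ≠ ∞ :=
    ((integrable_rpow_abs_mul_exp_neg_mul_rpow_abs hq0 (b := 1 / 2 - α / κ)
      (by rw [sub_pos, div_lt_iff₀ hκ]; linarith)).const_mul c).lintegral_lt_top.ne
  have hfun : ∀ ω, α * ∑' n : ℕ, ((n : ℝ) + 1) ^ (t * q / (d : ℝ) + q / 2 - 1) *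
        |((n : ℝ) + 1) ^ (-(s / (d : ℝ) + 1 / 2 - 1 / q)) * κ ^ (-(1 / q)) * ξ n ω| ^ q
      = ∑' n, β n * |ξ n ω| ^ q := fun ω => by
    rw [← tsum_mul_left]
    refine tsum_congr fun n => ?_
    rw [rpow_mul_abs_besov_coeff_rpow hq0.ne' hκ.le (by positivity)]
    ring
  simp only [hfun]
  refine integrable_exp_tsum_mul (fun n => (hmeas n).abs.pow_const q)
    (fun n ω => by positivity) (hindep.comp (fun _ x => |x| ^ q) fun _ => by fun_prop)
    hβ0 hβb hβ (C := C.toNNReal) fun n => ?_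
  rw [ENNReal.coe_toNNReal hC,
    lintegral_rpow_abs_mul_exp_eq_of_map_eq_withDensity (hmeas n) (hdens n)]

/-- exponential integrability (Lassas–Saksman–Siltanen) for Besov measures:
with u_l = l^{-(s/d+1/2-1/q)} κ^{-1/q} ξ_l, ξ_l i.i.d. with density ∝ exp(-|x|^q/2),
for t < s - d/q and 0 < α < κ/2 one has E exp(α ‖u‖_{X^{t,q}}^q) < ∞. -/
theorem besov_exp_moment_finite
    {Ω : Type*} [MeasurableSpace Ω] (P : Measure Ω) [IsProbabilityMeasure P]
    (q s t κ : ℝ) (d : ℕ) (hd : 1 ≤ d) (hq : 1 ≤ q) (hs : 0 < s) (hκ : 0 < κ)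
    (ht : t < s - (d : ℝ) / q)
    (c : ℝ) (hc : 0 < c)
    (ξ : ℕ → Ω → ℝ) (hmeas : ∀ l, Measurable (ξ l))
    (hindep : iIndepFun ξ P)
    (hdens : ∀ l, Measure.map (ξ l) P
      = volume.withDensity (fun x => ENNReal.ofReal (c * Real.exp (-(|x| ^ q) / 2))))
    (α : ℝ) (hα0 : 0 < α) (hα : α < κ / 2) :
    Integrable (fun ω => Real.exp (α * ∑' n : ℕ,
      ((n : ℝ) + 1) ^ (t * q / (d : ℝ) + q / 2 - 1) *
        |((n : ℝ) + 1) ^ (-(s / (d : ℝ) + 1 / 2 - 1 / q)) * κ ^ (-(1 / q)) * ξ n ω| ^ q)) P :=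
  besov_exp_moment_finite_general P q s t κ d hd hq hκ ht c ξ hmeas hindep hdens α hα0 hα
end

section
/- Conversely, if u is a draw from a (κ, X^{s,q}) measure and t ≥ s - d/q, then ‖u‖_{X^{t,q}} = ∞ almost surely. -/
open MeasureTheory Real ProbabilityTheory Filter Topology Finset
open scoped ENNReal

/-!
The `n`-th term of the series is `κ⁻¹ (n+1)^((t-s)q/d) |ξ n|^q`, and `t ≥ s - d/q` makes the
exponent at least `-1`; so it suffices that `∑ |ξ n|^q / (n+1)` diverges almost surely. Bounding
`|ξ n|^q` below by the indicator of `|ξ n| ≥ 1`, the strong law of large numbers makes the Cesàro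
means of these indicators converge to `P(|ξ 0| ≥ 1) > 0`, and a sequence with positive Cesàro limit
`p` is not summable against the weights `1/(n+1)`: the block `N ≤ n < 2N` alone contributes about
`p/2`.
-/

theorem sum_Ico_div_le_sum_Ico_inv_succ_mul {Y : ℕ → ℝ} (hY : ∀ n, 0 ≤ Y n) (N : ℕ) :
    (∑ i ∈ Ico N (2 * N), Y i) / (2 * N : ℕ) ≤ ∑ i ∈ Ico N (2 * N), ((i : ℝ) + 1)⁻¹ * Y i := by
  rw [sum_div]
  refine sum_le_sum fun i hi => ?_
  have hi2N : (i : ℝ) + 1 ≤ (2 * N : ℕ) := by exact_mod_cast (mem_Ico.mp hi).2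
  rw [div_eq_inv_mul]
  exact mul_le_mul_of_nonneg_right (inv_anti₀ (by positivity) hi2N) (hY i)

theorem tendsto_sum_Ico_two_mul_of_summable {f : ℕ → ℝ} (hf : Summable f) :
    Tendsto (fun N : ℕ => ∑ i ∈ Ico N (2 * N), f i) atTop (𝓝 0) := by
  have hpart := hf.hasSum.tendsto_sum_nat
  have hdouble := hpart.comp (tendsto_id.const_mul_atTop' two_pos)
  have hdiff := hdouble.sub hpart
  rw [sub_self] at hdiff
  refine hdiff.congr fun N => ?_
  simp [sum_Ico_eq_sub _ (by omega : N ≤ 2 * N)]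

theorem not_summable_inv_succ_mul_of_tendsto_cesaro {Y : ℕ → ℝ} {p : ℝ} (hp : 0 < p)
    (hY : ∀ n, 0 ≤ Y n)
    (h : Tendsto (fun N : ℕ => (∑ i ∈ range N, Y i) / N) atTop (𝓝 p)) :
    ¬ Summable (fun n : ℕ => ((n : ℝ) + 1)⁻¹ * Y n) := by
  intro hsum
  have hblock : Tendsto (fun N : ℕ => (∑ i ∈ Ico N (2 * N), Y i) / (2 * N : ℕ)) atTop
      (𝓝 (p / 2)) := by
    have hdouble := h.comp (tendsto_id.const_mul_atTop' two_pos)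
    have hlim := hdouble.sub (h.div_const 2)
    rw [show p - p / 2 = p / 2 by ring] at hlim
    refine hlim.congr' ?_
    filter_upwards [eventually_ge_atTop 1] with N hN
    have hN0 : (N : ℝ) ≠ 0 := Nat.cast_ne_zero.mpr (by omega)
    simp only [Function.comp_apply, id, sum_Ico_eq_sub _ (by omega : N ≤ 2 * N)]
    push_cast
    field_simp
  have hle := le_of_tendsto_of_tendsto hblock (tendsto_sum_Ico_two_mul_of_summable hsum)
    (Eventually.of_forall (sum_Ico_div_le_sum_Ico_inv_succ_mul hY))
  linarith

theorem strong_law_ae_indicator {Ω α : Type*} [MeasurableSpace Ω] [MeasurableSpace α]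
    {P : Measure Ω} [IsFiniteMeasure P] {ξ : ℕ → Ω → α}
    (hindep : Pairwise fun i j => IndepFun (ξ i) (ξ j) P)
    (hident : ∀ i, IdentDistrib (ξ i) (ξ 0) P P) {A : Set α} (hA : MeasurableSet A) :
    ∀ᵐ ω ∂P, Tendsto (fun N : ℕ => (∑ i ∈ range N, A.indicator (1 : α → ℝ) (ξ i ω)) / N) atTop
      (𝓝 ((P.map (ξ 0)).real A)) := by
  have hind : Measurable (A.indicator (1 : α → ℝ)) := measurable_one.indicator hA
  have hint : Integrable (fun ω => A.indicator (1 : α → ℝ) (ξ 0 ω)) P := by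
    refine Integrable.of_bound (C := 1)
      (hind.comp_aemeasurable (hident 0).aemeasurable_fst).aestronglyMeasurable
      (Eventually.of_forall fun ω => ?_)
    by_cases hω : ξ 0 ω ∈ A <;> simp [hω]
  have hmean : ∫ ω, A.indicator (1 : α → ℝ) (ξ 0 ω) ∂P = (P.map (ξ 0)).real A := by
    rw [← integral_indicator_one hA,
      integral_map (hident 0).aemeasurable_fst hind.aestronglyMeasurable]
  rw [← hmean]
  exact strong_law_ae_real (fun i ω => A.indicator 1 (ξ i ω)) hint
    (fun i j hij => (hindep hij).comp hind hind) (fun i => (hident i).comp hind)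

theorem withDensity_apply_ne_zero_of_forall_ne_zero {α : Type*} [MeasurableSpace α] {μ : Measure α}
    {f : α → ℝ≥0∞} (hf : AEMeasurable f μ) (hpos : ∀ x, f x ≠ 0) {s : Set α} (hs : μ s ≠ 0) :
    μ.withDensity f s ≠ 0 := by
  rwa [Ne, withDensity_apply_eq_zero' hf, show {x | f x ≠ 0} = Set.univ from
    Set.eq_univ_of_forall hpos, Set.univ_inter]

section Exponents

variable {q κ : ℝ}

theorem rpow_mul_abs_rpow_neg_mul_rpow_neg_mul_rpow {r : ℝ} (hr : 0 < r) (hκ : 0 < κ) (hq : q ≠ 0)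
    (a b x : ℝ) :
    r ^ a * |r ^ (-b) * κ ^ (-(1 / q)) * x| ^ q = κ⁻¹ * (r ^ (a - b * q) * |x| ^ q) := by
  rw [abs_mul, abs_mul, abs_of_pos (rpow_pos_of_pos hr _), abs_of_pos (rpow_pos_of_pos hκ _),
    mul_rpow (by positivity) (abs_nonneg x), mul_rpow (by positivity) (by positivity),
    ← rpow_mul hr.le, ← rpow_mul hκ.le, show -(1 / q) * q = -1 by field_simp, rpow_neg_one,
    sub_eq_add_neg, rpow_add hr, neg_mul]
  ring

theorem neg_one_le_sub_mul_div {s t d : ℝ} (hq : 0 < q) (hd : 0 ≤ d) (ht : s - d / q ≤ t) :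
    -1 ≤ (t - s) * q / d := by
  rcases hd.eq_or_lt with rfl | hd
  · simp
  rw [le_div_iff₀ hd, neg_one_mul, ← div_le_iff₀ hq, neg_div]
  linarith

theorem inv_mul_rpow_le_besov_term {s t r : ℝ} {d : ℕ} (hq : 0 < q) (hκ : 0 < κ)
    (ht : s - (d : ℝ) / q ≤ t) (hr : 1 ≤ r) (x : ℝ) :
    κ⁻¹ * (r⁻¹ * |x| ^ q) ≤ r ^ (t * q / (d : ℝ) + q / 2 - 1) *
      |r ^ (-(s / (d : ℝ) + 1 / 2 - 1 / q)) * κ ^ (-(1 / q)) * x| ^ q := by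
  rw [rpow_mul_abs_rpow_neg_mul_rpow_neg_mul_rpow (by linarith) hκ hq.ne']
  have hexp : t * q / d + q / 2 - 1 - (s / d + 1 / 2 - 1 / q) * q = (t - s) * q / d := by
    field_simp
    ring
  gcongr
  rw [hexp, ← rpow_neg_one]
  exact rpow_le_rpow_of_exponent_le hr (neg_one_le_sub_mul_div hq d.cast_nonneg ht)

end Exponents

theorem indicator_one_le_abs_rpow {q : ℝ} (hq : 0 ≤ q) (x : ℝ) :
    {y : ℝ | 1 ≤ |y|}.indicator 1 x ≤ |x| ^ q := by
  by_cases hx : 1 ≤ |x|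
  · simpa [hx] using one_le_rpow hx hq
  · simpa [hx] using rpow_nonneg (abs_nonneg x) q

theorem besov_norm_infinite_as_general
    {Ω : Type*} [MeasurableSpace Ω] (P : Measure Ω) [IsProbabilityMeasure P]
    (q s t κ : ℝ) (d : ℕ) (hq : 1 ≤ q) (hκ : 0 < κ)
    (ht : s - (d : ℝ) / q ≤ t)
    (c : ℝ) (hc : 0 < c)
    (ξ : ℕ → Ω → ℝ) (hmeas : ∀ l, Measurable (ξ l))
    (hindep : iIndepFun ξ P)
    (hdens : ∀ l, Measure.map (ξ l) P
      = volume.withDensity (fun x => ENNReal.ofReal (c * Real.exp (-(|x| ^ q) / 2)))) :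
    ∀ᵐ ω ∂P, ¬ Summable (fun n : ℕ =>
      ((n : ℝ) + 1) ^ (t * q / (d : ℝ) + q / 2 - 1) *
        |((n : ℝ) + 1) ^ (-(s / (d : ℝ) + 1 / 2 - 1 / q)) * κ ^ (-(1 / q)) * ξ n ω| ^ q) := by
  have hq0 : 0 < q := by linarith
  set A := {x : ℝ | 1 ≤ |x|}
  have hA : MeasurableSet A := measurableSet_le measurable_const measurable_abs
  have hident : ∀ i, IdentDistrib (ξ i) (ξ 0) P P := fun i =>
    ⟨(hmeas i).aemeasurable, (hmeas 0).aemeasurable, by rw [hdens i, hdens 0]⟩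
  have hlaw : 0 < (P.map (ξ 0)).real A := by
    refine ENNReal.toReal_pos ?_ (measure_ne_top _ _)
    rw [hdens 0]
    refine withDensity_apply_ne_zero_of_forall_ne_zero (by fun_prop) (fun x => by positivity) ?_
    have hIci : Set.Ici (1 : ℝ) ⊆ A := fun x hx => le_trans hx (le_abs_self x)
    exact (lt_of_lt_of_le (by simp) (measure_mono hIci)).ne'
  filter_upwards [strong_law_ae_indicator (fun i j hij => hindep.indepFun hij) hident hA]
    with ω hfreq hsum
  have hnonneg : ∀ n, 0 ≤ A.indicator (1 : ℝ → ℝ) (ξ n ω) := fun n =>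
    Set.indicator_nonneg (fun _ _ => zero_le_one) _
  refine not_summable_inv_succ_mul_of_tendsto_cesaro hlaw hnonneg hfreq ?_
  refine (hsum.mul_left κ).of_nonneg_of_le (fun n => mul_nonneg (by positivity) (hnonneg n))
    fun n => ?_
  calc ((n : ℝ) + 1)⁻¹ * A.indicator 1 (ξ n ω)
      ≤ κ * (κ⁻¹ * (((n : ℝ) + 1)⁻¹ * |ξ n ω| ^ q)) := by
        rw [mul_inv_cancel_left₀ hκ.ne']
        gcongr
        exact indicator_one_le_abs_rpow hq0.le _
    _ ≤ _ := mul_le_mul_of_nonneg_left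
        (inv_mul_rpow_le_besov_term hq0 hκ ht (le_add_of_nonneg_left n.cast_nonneg) _) hκ.le

/-- conversely, if t ≥ s - d/q then ‖u‖_{X^{t,q}} = ∞ almost surely,
i.e. the defining series diverges a.s. -/
theorem besov_norm_infinite_as
    {Ω : Type*} [MeasurableSpace Ω] (P : Measure Ω) [IsProbabilityMeasure P]
    (q s t κ : ℝ) (d : ℕ) (hd : 1 ≤ d) (hq : 1 ≤ q) (hs : 0 < s) (hκ : 0 < κ)
    (ht : s - (d : ℝ) / q ≤ t)
    (c : ℝ) (hc : 0 < c)
    (ξ : ℕ → Ω → ℝ) (hmeas : ∀ l, Measurable (ξ l))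
    (hindep : iIndepFun ξ P)
    (hdens : ∀ l, Measure.map (ξ l) P
      = volume.withDensity (fun x => ENNReal.ofReal (c * Real.exp (-(|x| ^ q) / 2)))) :
    ∀ᵐ ω ∂P, ¬ Summable (fun n : ℕ =>
      ((n : ℝ) + 1) ^ (t * q / (d : ℝ) + q / 2 - 1) *
        |((n : ℝ) + 1) ^ (-(s / (d : ℝ) + 1 / 2 - 1 / q)) * κ ^ (-(1 / q)) * ξ n ω| ^ q) :=
  besov_norm_infinite_as_general P q s t κ d hq hκ ht c hc ξ hmeas hindep hdens
end

section
/- Let {ξ_l} be independent real random variables and λ_l > 0 a sequence. Let A = {sup_l λ_l|ξ_l| > r} and B = {sup_l λ_l|ξ_l| > 2r}. If for every m the event C_m = {λ_m|ξ_m| > 2r} satisfies P(C_m) ≤ (P(E_m))^2 with E_m = {λ_m|ξ_m| > r}, then P(B) ≤ 2 (P(A))^2. -/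
open MeasureTheory ProbabilityTheory

/-!
Write `E_m = {λ_m|ξ_m| > r}`, `C_m = {λ_m|ξ_m| > 2r}`, `A = ⋃ E_m`, `B = ⋃ C_m`. If `P(A) > 1/2`
then `P(B) ≤ P(A) ≤ 2 P(A)²`. Otherwise independence gives, for every finite set of indices,
`1 - P(A) ≤ ∏ (1 - P(E_m)) ≤ exp (-∑ P(E_m))`, and `exp (-2x) ≤ 1 - x` on `[0, 1/2]` turns this into
`∑ P(E_m) ≤ 2 P(A)`. Hence `P(B) ≤ ∑ P(C_m) ≤ ∑ P(E_m)² ≤ P(A) ∑ P(E_m) ≤ 2 P(A)²`.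
-/

theorem Real.exp_neg_two_mul_le_one_sub {x : ℝ} (hx0 : 0 ≤ x) (hx : x ≤ 1 / 2) :
    Real.exp (-(2 * x)) ≤ 1 - x := by
  have hpos : 0 < 1 + 2 * x := by linarith
  calc Real.exp (-(2 * x)) = (Real.exp (2 * x))⁻¹ := Real.exp_neg _
    _ ≤ (1 + 2 * x)⁻¹ := inv_anti₀ hpos (by linarith [Real.add_one_le_exp (2 * x)])
    _ ≤ 1 - x := by rw [inv_le_iff_one_le_mul₀ hpos]; nlinarith

theorem Real.prod_one_sub_le_exp_neg_sum {ι : Type*} (s : Finset ι) {a : ι → ℝ}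
    (ha : ∀ i ∈ s, a i ≤ 1) : ∏ i ∈ s, (1 - a i) ≤ Real.exp (-∑ i ∈ s, a i) := by
  rw [← Finset.sum_neg_distrib, Real.exp_sum]
  exact Finset.prod_le_prod (fun i hi ↦ by linarith [ha i hi]) fun i _ ↦ Real.one_sub_le_exp_neg _

namespace ProbabilityTheory

variable {Ω ι : Type*} {mΩ : MeasurableSpace Ω} {μ : Measure Ω} {E : ι → Set Ω}

theorem iIndepSet.compl (h : iIndepSet E μ) : iIndepSet (fun i ↦ (E i)ᶜ) μ := by
  have generateFrom_compl_le (t : Set Ω) :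
      MeasurableSpace.generateFrom {tᶜ} ≤ MeasurableSpace.generateFrom {t} :=
    MeasurableSpace.generateFrom_le <| by
      rintro _ rfl; exact (MeasurableSpace.measurableSet_generateFrom (Set.mem_singleton t)).compl
  rw [iIndepSet_iff_iIndep] at h ⊢
  convert h using 2 with i
  exact le_antisymm (generateFrom_compl_le _) (by simpa using generateFrom_compl_le (E i)ᶜ)

theorem iIndepFun.iIndepSet_preimage {β : ι → Type*} {mβ : ∀ i, MeasurableSpace (β i)}
    {f : ∀ i, Ω → β i} (hf : iIndepFun f μ) (hfm : ∀ i, Measurable (f i))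
    {S : ∀ i, Set (β i)} (hS : ∀ i, MeasurableSet (S i)) :
    iIndepSet (fun i ↦ f i ⁻¹' S i) μ :=
  (iIndepSet_iff_meas_biInter fun i ↦ hfm i (hS i)).2 fun s ↦
    hf.measure_inter_preimage_eq_mul s fun i _ ↦ hS i

theorem iIndepSet.measureReal_biInter_compl (hE : ∀ i, MeasurableSet (E i))
    (h : iIndepSet E μ) (s : Finset ι) :
    μ.real (⋂ i ∈ s, (E i)ᶜ) = ∏ i ∈ s, (1 - μ.real (E i)) := by
  have := h.isProbabilityMeasure
  rw [measureReal_def, h.compl.meas_biInter s, ENNReal.toReal_prod]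
  exact Finset.prod_congr rfl fun i _ ↦ probReal_compl_eq_one_sub (hE i)

theorem iIndepSet.sum_measureReal_le_two_mul (hE : ∀ i, MeasurableSet (E i))
    (h : iIndepSet E μ) (hhalf : μ.real (⋃ i, E i) ≤ 1 / 2) (s : Finset ι) :
    ∑ i ∈ s, μ.real (E i) ≤ 2 * μ.real (⋃ i, E i) := by
  have := h.isProbabilityMeasure
  set p := μ.real (⋃ i, E i)
  have hcompl : 1 - p ≤ μ.real (⋂ i ∈ s, (E i)ᶜ) := by
    rw [← Set.compl_iUnion₂,
      probReal_compl_eq_one_sub (Finset.measurableSet_biUnion s fun i _ ↦ hE i)]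
    have : μ.real (⋃ i ∈ s, E i) ≤ p :=
      measureReal_mono (Set.iUnion₂_subset fun i _ ↦ Set.subset_iUnion E i)
    linarith
  have hexp : Real.exp (-(2 * p)) ≤ Real.exp (-∑ i ∈ s, μ.real (E i)) :=
    calc Real.exp (-(2 * p)) ≤ 1 - p := Real.exp_neg_two_mul_le_one_sub measureReal_nonneg hhalf
      _ ≤ ∏ i ∈ s, (1 - μ.real (E i)) := h.measureReal_biInter_compl hE s ▸ hcompl
      _ ≤ _ := Real.prod_one_sub_le_exp_neg_sum s fun i _ ↦ measureReal_le_one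
  linarith [Real.exp_le_exp.1 hexp]

theorem iIndepSet.tsum_measure_le_two_mul (hE : ∀ i, MeasurableSet (E i))
    (h : iIndepSet E μ) (hhalf : μ (⋃ i, E i) ≤ 2⁻¹) :
    ∑' i, μ (E i) ≤ 2 * μ (⋃ i, E i) := by
  have := h.isProbabilityMeasure
  have hhalf' : μ.real (⋃ i, E i) ≤ 1 / 2 := by
    simpa [measureReal_def, one_div] using ENNReal.toReal_mono (by simp) hhalf
  rw [ENNReal.tsum_eq_iSup_sum]
  refine iSup_le fun s ↦ ?_
  have hfin : ∀ i ∈ s, μ (E i) ≠ ⊤ := fun i _ ↦ measure_ne_top μ (E i)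
  rw [← ENNReal.toReal_le_toReal (ENNReal.sum_ne_top.2 hfin) (by finiteness),
    ENNReal.toReal_sum hfin]
  simpa [measureReal_def] using h.sum_measureReal_le_two_mul hE hhalf' s

theorem iIndepSet.measure_iUnion_le_two_mul_sq [Countable ι] {C : ι → Set Ω}
    (hE : ∀ i, MeasurableSet (E i)) (h : iIndepSet E μ) (hCE : ∀ i, C i ⊆ E i)
    (hC : ∀ i, μ (C i) ≤ μ (E i) ^ 2) :
    μ (⋃ i, C i) ≤ 2 * μ (⋃ i, E i) ^ 2 := by
  set A := ⋃ i, E i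
  by_cases hhalf : μ A ≤ 2⁻¹
  · calc μ (⋃ i, C i) ≤ ∑' i, μ (C i) := measure_iUnion_le C
      _ ≤ ∑' i, μ (E i) * μ A := ENNReal.tsum_le_tsum fun i ↦
          (hC i).trans (by rw [sq]; gcongr; exact Set.subset_iUnion E i)
      _ = (∑' i, μ (E i)) * μ A := ENNReal.tsum_mul_right
      _ ≤ 2 * μ A * μ A := by gcongr; exact h.tsum_measure_le_two_mul hE hhalf
      _ = 2 * μ A ^ 2 := by ring
  · have hone : 1 ≤ 2 * μ A :=
      calc 1 = 2 * 2⁻¹ := (ENNReal.mul_inv_cancel two_ne_zero ENNReal.ofNat_ne_top).symm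
        _ ≤ 2 * μ A := by gcongr; exact (not_le.1 hhalf).le
    calc μ (⋃ i, C i) ≤ μ A := measure_mono (Set.iUnion_mono hCE)
      _ = 1 * μ A := (one_mul _).symm
      _ ≤ 2 * μ A * μ A := by gcongr
      _ = 2 * μ A ^ 2 := by ring

end ProbabilityTheory

theorem sup_tail_doubling_general
    {Ω : Type*} [MeasurableSpace Ω] (P : Measure Ω) [IsProbabilityMeasure P]
    (ξ : ℕ → Ω → ℝ) (hmeas : ∀ l, Measurable (ξ l))
    (hindep : iIndepFun ξ P)
    (lam : ℕ → ℝ)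
    (r : ℝ) (hr : 0 < r)
    (hCE : ∀ m, P {ω | 2 * r < lam m * |ξ m ω|} ≤ (P {ω | r < lam m * |ξ m ω|}) ^ 2) :
    P {ω | ∃ l, 2 * r < lam l * |ξ l ω|} ≤ 2 * (P {ω | ∃ l, r < lam l * |ξ l ω|}) ^ 2 := by
  have hS : ∀ m, MeasurableSet {x : ℝ | r < lam m * |x|} := fun m ↦
    measurableSet_lt measurable_const (by fun_prop)
  have hindepE := hindep.iIndepSet_preimage hmeas hS
  simp only [Set.ofPred_exists]
  refine hindepE.measure_iUnion_le_two_mul_sq (fun m ↦ hmeas m (hS m)) (fun m ω hω ↦ ?_) hCE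
  exact lt_trans (by linarith : r < 2 * r) hω

/-- doubling inequality for the tail of the supremum of independent
weighted random variables (Kahane-type argument): if P(λ_m|ξ_m| > 2r) ≤ (P(λ_m|ξ_m| > r))²
for every m, then P(sup_l λ_l|ξ_l| > 2r) ≤ 2 (P(sup_l λ_l|ξ_l| > r))². -/
theorem sup_tail_doubling
    {Ω : Type*} [MeasurableSpace Ω] (P : Measure Ω) [IsProbabilityMeasure P]
    (ξ : ℕ → Ω → ℝ) (hmeas : ∀ l, Measurable (ξ l))
    (hindep : iIndepFun ξ P)
    (lam : ℕ → ℝ) (hlam : ∀ l, 0 < lam l)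
    (r : ℝ) (hr : 0 < r)
    (hCE : ∀ m, P {ω | 2 * r < lam m * |ξ m ω|} ≤ (P {ω | r < lam m * |ξ m ω|}) ^ 2) :
    P {ω | ∃ l, 2 * r < lam l * |ξ l ω|} ≤ 2 * (P {ω | ∃ l, r < lam l * |ξ l ω|}) ^ 2 :=
  sup_tail_doubling_general P ξ hmeas hindep lam r hr hCE
end

section
/- Let ξ be a real random variable with density proportional to |x|^d exp(-|x|^q/2) restricted appropriately (equivalently, the radial profile of a d-dimensional exp(-|x|^q/2) density), q > 1, d ≥ 1. There is a constant c depending only on q and d such that for all r̂ ≥ c, P(|ξ| > 2r̂) ≤ (P(|ξ| > r̂))^2. -/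
/-!
Write `T(ρ) = ∫_ρ^∞ s^d e^{-s^q/2} ds`. For `s > ρ` and `0 ≤ a < 1/2`, splitting
`s^q/2 = a s^q + (1/2 - a) s^q ≥ a ρ^q + (1/2 - a) s^q` gives
`T(ρ) ≤ e^{-a ρ^q} ∫_0^∞ s^d e^{-(1/2 - a) s^q} ds`. Integrating over
`(ρ, α^{1/q} ρ]` gives `T(ρ) ≥ (α^{1/q} - 1) e^{-α ρ^q/2}` for `α, ρ ≥ 1`. Because `2^q > 2` when
`q > 1`, one can take `1 < α < a 2^q`; then `T(2r) ≲ e^{-a 2^q r^q}` decays strictly faster than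
`T(r)^2 ≳ e^{-α r^q}`, so the squared tail wins for large `r`.
-/

open MeasureTheory Real Set Filter Topology

noncomputable def radialTail (d q ρ : ℝ) : ℝ :=
  ∫ s in Ioi ρ, s ^ d * exp (-(s ^ q) / 2)

section radialTail

variable {d q : ℝ}

lemma integrableOn_rpow_mul_exp_neg_rpow_div_two (hd : -1 < d) (hq : 0 < q) :
    IntegrableOn (fun s : ℝ ↦ s ^ d * exp (-(s ^ q) / 2)) (Ioi 0) := by
  convert integrableOn_rpow_mul_exp_neg_mul_rpow hd hq one_half_pos using 4
  ring

lemma radialTail_le_exp_mul (hd : -1 < d) (hq : 0 < q) {a ρ : ℝ} (ha₀ : 0 ≤ a) (ha : a < 1 / 2)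
    (hρ : 0 ≤ ρ) :
    radialTail d q ρ ≤ exp (-(a * ρ ^ q)) * ∫ s in Ioi 0, s ^ d * exp (-(1 / 2 - a) * s ^ q) := by
  have hmaj := integrableOn_rpow_mul_exp_neg_mul_rpow hd hq (sub_pos.2 ha)
  have hpointwise : ∀ s ∈ Ioi ρ, s ^ d * exp (-(s ^ q) / 2) ≤
      exp (-(a * ρ ^ q)) * (s ^ d * exp (-(1 / 2 - a) * s ^ q)) := by
    intro s (hs : ρ < s)
    have hρs : ρ ^ q ≤ s ^ q := rpow_le_rpow hρ hs.le hq.le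
    have hsplit : -(s ^ q) / 2 ≤ -(a * ρ ^ q) + -(1 / 2 - a) * s ^ q := by nlinarith
    calc s ^ d * exp (-(s ^ q) / 2)
        ≤ s ^ d * exp (-(a * ρ ^ q) + -(1 / 2 - a) * s ^ q) := by
          gcongr
          exact (rpow_pos_of_pos (hρ.trans_lt hs) d).le
      _ = _ := by rw [exp_add]; ring
  calc radialTail d q ρ
      ≤ ∫ s in Ioi ρ, exp (-(a * ρ ^ q)) * (s ^ d * exp (-(1 / 2 - a) * s ^ q)) :=
        setIntegral_mono_on
          ((integrableOn_rpow_mul_exp_neg_rpow_div_two hd hq).mono_set (Ioi_subset_Ioi hρ))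
          ((hmaj.mono_set (Ioi_subset_Ioi hρ)).const_mul _) measurableSet_Ioi hpointwise
    _ = exp (-(a * ρ ^ q)) * ∫ s in Ioi ρ, s ^ d * exp (-(1 / 2 - a) * s ^ q) :=
        integral_const_mul _ _
    _ ≤ exp (-(a * ρ ^ q)) * ∫ s in Ioi 0, s ^ d * exp (-(1 / 2 - a) * s ^ q) := by
        refine mul_le_mul_of_nonneg_left (setIntegral_mono_set hmaj ?_
          (Ioi_subset_Ioi hρ).eventuallyLE) (exp_nonneg _)
        filter_upwards [ae_restrict_mem measurableSet_Ioi] with s (hs : 0 < s)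
        positivity

lemma mul_exp_le_radialTail (hd : 0 ≤ d) (hq : 0 < q) {α ρ : ℝ} (hα : 1 ≤ α) (hρ : 1 ≤ ρ) :
    (α ^ q⁻¹ - 1) * exp (-(α * ρ ^ q) / 2) ≤ radialTail d q ρ := by
  set ℓ := α ^ q⁻¹
  have hℓ : 1 ≤ ℓ := one_le_rpow hα (inv_nonneg.2 hq.le)
  have hℓρ : (ℓ * ρ) ^ q = α * ρ ^ q := by
    rw [mul_rpow (by linarith) (by linarith), ← rpow_mul (by linarith), inv_mul_cancel₀ hq.ne',
      rpow_one]
  have hIoi := (integrableOn_rpow_mul_exp_neg_rpow_div_two (d := d) (by linarith) hq).mono_set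
    (Ioi_subset_Ioi (by linarith : 0 ≤ ρ))
  have hpointwise : ∀ s ∈ Ioc ρ (ℓ * ρ), exp (-(α * ρ ^ q) / 2) ≤ s ^ d * exp (-(s ^ q) / 2) := by
    rintro s ⟨hρs, hsℓ⟩
    have hs1 : 1 ≤ s ^ d := one_le_rpow (hρ.trans hρs.le) hd
    have hsq : s ^ q ≤ α * ρ ^ q := hℓρ ▸ rpow_le_rpow (by linarith) hsℓ hq.le
    calc exp (-(α * ρ ^ q) / 2) ≤ exp (-(s ^ q) / 2) := exp_le_exp.2 (by linarith)
      _ ≤ s ^ d * exp (-(s ^ q) / 2) := le_mul_of_one_le_left (exp_nonneg _) hs1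
  calc (ℓ - 1) * exp (-(α * ρ ^ q) / 2)
      ≤ (ℓ * ρ - ρ) * exp (-(α * ρ ^ q) / 2) :=
        mul_le_mul_of_nonneg_right (by nlinarith) (exp_nonneg _)
    _ = ∫ _ in Ioc ρ (ℓ * ρ), exp (-(α * ρ ^ q) / 2) := by
        rw [setIntegral_const, measureReal_def, volume_Ioc, ENNReal.toReal_ofReal (by nlinarith),
          smul_eq_mul]
    _ ≤ ∫ s in Ioc ρ (ℓ * ρ), s ^ d * exp (-(s ^ q) / 2) :=
        setIntegral_mono_on (integrableOn_const measure_Ioc_lt_top.ne)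
          (hIoi.mono_set Ioc_subset_Ioi_self) measurableSet_Ioc hpointwise
    _ ≤ radialTail d q ρ := by
        refine setIntegral_mono_set hIoi ?_ Ioc_subset_Ioi_self.eventuallyLE
        filter_upwards [ae_restrict_mem measurableSet_Ioi] with s (hs : ρ < s)
        have : 0 < s := by linarith
        positivity

end radialTail

lemma eventually_mul_exp_le_sq {K A c α β q : ℝ} (hK : 0 ≤ K) (hc : 0 < c) (hαβ : α < β)
    (hq : 0 < q) :
    ∀ᶠ r in atTop, K * (exp (-(β * r ^ q)) * A) ≤ (K * (c * exp (-(α * r ^ q) / 2))) ^ 2 := by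
  rcases hK.eq_or_lt with rfl | hK
  · simp
  have hdecay : Tendsto (fun r : ℝ ↦ A * exp (-((β - α) * r ^ q))) atTop (𝓝 0) := by
    simpa using ((tendsto_exp_neg_atTop_nhds_zero.comp
      ((tendsto_rpow_atTop hq).const_mul_atTop (sub_pos.2 hαβ))).const_mul A)
  filter_upwards [hdecay.eventually_le_const (by positivity : 0 < K * c ^ 2)] with r hr
  have hsplit : exp (-(β * r ^ q)) = exp (-((β - α) * r ^ q)) * exp (-(α * r ^ q)) := by
    rw [← exp_add]; ring_nf
  have hsq : exp (-(α * r ^ q) / 2) ^ 2 = exp (-(α * r ^ q)) := by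
    rw [← exp_nat_mul]; ring_nf
  calc K * (exp (-(β * r ^ q)) * A)
      = K * (A * exp (-((β - α) * r ^ q))) * exp (-(α * r ^ q)) := by rw [hsplit]; ring
    _ ≤ K * (K * c ^ 2) * exp (-(α * r ^ q)) := by gcongr
    _ = (K * (c * exp (-(α * r ^ q) / 2))) ^ 2 := by rw [mul_pow, mul_pow, hsq]; ring

theorem radial_tail_squaring_general
    (q : ℝ) (hq : 1 < q) (d : ℕ) :
    ∃ c : ℝ, 0 < c ∧ ∀ rhat : ℝ, c ≤ rhat →
      (2 * Real.pi ^ ((d : ℝ) / 2) / Real.Gamma ((d : ℝ) / 2)) /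
          (∫ x : EuclideanSpace ℝ (Fin d), Real.exp (-(‖x‖ ^ q) / 2)) *
        (∫ s in Set.Ioi (2 * rhat), s ^ (d : ℝ) * Real.exp (-(s ^ q) / 2))
      ≤ ((2 * Real.pi ^ ((d : ℝ) / 2) / Real.Gamma ((d : ℝ) / 2)) /
          (∫ x : EuclideanSpace ℝ (Fin d), Real.exp (-(‖x‖ ^ q) / 2)) *
        (∫ s in Set.Ioi rhat, s ^ (d : ℝ) * Real.exp (-(s ^ q) / 2))) ^ 2 := by
  set K : ℝ := (2 * π ^ ((d : ℝ) / 2) / Gamma ((d : ℝ) / 2)) /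
    ∫ x : EuclideanSpace ℝ (Fin d), exp (-(‖x‖ ^ q) / 2)
  have hK : 0 ≤ K := by positivity
  have hq₀ : 0 < q := by linarith
  have htwo : 2 < (2 : ℝ) ^ q := by
    simpa using rpow_lt_rpow_of_exponent_lt one_lt_two hq
  obtain ⟨α, hα, hα2⟩ : ∃ α : ℝ, 1 < α ∧ α < 2 ^ q / 2 := exists_between (by linarith)
  obtain ⟨a, haα, ha⟩ : ∃ a : ℝ, α / 2 ^ q < a ∧ a < 1 / 2 :=
    exists_between (by rw [div_lt_iff₀ (by positivity)]; linarith)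
  have hαa : α < a * 2 ^ q := (div_lt_iff₀ (by positivity)).1 haα
  have hc : 0 < α ^ q⁻¹ - 1 := sub_pos.2 (one_lt_rpow hα (inv_pos.2 hq₀))
  set A : ℝ := ∫ s in Ioi 0, s ^ (d : ℝ) * exp (-(1 / 2 - a) * s ^ q)
  obtain ⟨r₀, hr₀⟩ := (eventually_mul_exp_le_sq (A := A) hK hc hαa hq₀).exists_forall_of_atTop
  refine ⟨max r₀ 1, by positivity, fun r hr ↦ ?_⟩
  have hr₁ : 1 ≤ r := le_of_max_le_right hr
  change K * radialTail d q (2 * r) ≤ (K * radialTail d q r) ^ 2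
  calc K * radialTail d q (2 * r)
      ≤ K * (exp (-(a * (2 * r) ^ q)) * A) :=
        mul_le_mul_of_nonneg_left (radialTail_le_exp_mul (neg_one_lt_zero.trans_le d.cast_nonneg)
          hq₀ ((div_pos (by linarith) (by positivity)).trans haα).le ha (by linarith)) hK
    _ = K * (exp (-(a * 2 ^ q * r ^ q)) * A) := by
        rw [mul_rpow zero_le_two (by linarith), mul_assoc]
    _ ≤ (K * ((α ^ q⁻¹ - 1) * exp (-(α * r ^ q) / 2))) ^ 2 := hr₀ r (le_of_max_le_left hr)
    _ ≤ (K * radialTail d q r) ^ 2 :=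
        pow_le_pow_left₀ (mul_nonneg hK (mul_nonneg hc.le (exp_nonneg _)))
          (mul_le_mul_of_nonneg_left
            (mul_exp_le_radialTail d.cast_nonneg hq₀ hα.le hr₁) hK) 2

/-- tail-squaring inequality for the radial profile of the d-dimensional
density exp(-|x|^q/2), q > 1: with T(ρ) = (c_d/c_0)∫_ρ^∞ s^d exp(-s^q/2) ds, where
c_d = 2π^{d/2}/Γ(d/2) and c_0 = ∫_{ℝ^d} exp(-|x|^q/2)dx, there is c = c(q,d) such that
T(2r̂) ≤ (T r̂)² for all r̂ ≥ c. -/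
theorem radial_tail_squaring
    (q : ℝ) (hq : 1 < q) (d : ℕ) (hd : 1 ≤ d) :
    ∃ c : ℝ, 0 < c ∧ ∀ rhat : ℝ, c ≤ rhat →
      (2 * Real.pi ^ ((d : ℝ) / 2) / Real.Gamma ((d : ℝ) / 2)) /
          (∫ x : EuclideanSpace ℝ (Fin d), Real.exp (-(‖x‖ ^ q) / 2)) *
        (∫ s in Set.Ioi (2 * rhat), s ^ (d : ℝ) * Real.exp (-(s ^ q) / 2))
      ≤ ((2 * Real.pi ^ ((d : ℝ) / 2) / Real.Gamma ((d : ℝ) / 2)) /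
          (∫ x : EuclideanSpace ℝ (Fin d), Real.exp (-(‖x‖ ^ q) / 2)) *
        (∫ s in Set.Ioi rhat, s ^ (d : ℝ) * Real.exp (-(s ^ q) / 2))) ^ 2 :=
  radial_tail_squaring_general q hq d
end

section
/- Let 𝒫: [0,∞) → [0,1] be nonincreasing with 𝒫(2ρ) ≤ 2(𝒫(ρ))^2 for all ρ ≥ r, and suppose 𝒫(r) = 1/4. Then for every ε < (ln 2)/(2r), the Lebesgue–Stieltjes integral −∫_0^∞ e^{ερ} d𝒫(ρ) is finite. -/
/-!
Put `g = 2 Ps`. The doubling inequality becomes `g (2ρ) ≤ g ρ ^ 2`, so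
`g (2ⁿ r) ≤ g r ^ 2ⁿ = 2 ^ (-2ⁿ)`, and monotonicity interpolates between dyadic points:
`P (U > ρ) ≤ exp (-c ρ)` for `ρ ≥ r`, with `c = log 2 / (2r)`. For `0 < ε < c` this gives
`P (exp (εU) > t) ≤ t ^ (-c/ε)` for large `t`, integrable at infinity since `c/ε > 1`, and the
layer-cake formula turns this into integrability of `exp (εU)`.
-/

open MeasureTheory Real Set

theorem le_pow_two_pow_of_le_sq {g : ℝ → ℝ} {r : ℝ} (hr : 0 ≤ r) (hg : ∀ ρ, r ≤ ρ → 0 ≤ g ρ)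
    (hsq : ∀ ρ, r ≤ ρ → g (2 * ρ) ≤ g ρ ^ 2) (n : ℕ) :
    g (2 ^ n * r) ≤ g r ^ 2 ^ n := by
  induction n with
  | zero => simp
  | succ n ih =>
    have hr_le : r ≤ 2 ^ n * r := le_mul_of_one_le_left hr (one_le_pow₀ one_le_two)
    calc g (2 ^ (n + 1) * r) = g (2 * (2 ^ n * r)) := by ring_nf
      _ ≤ g (2 ^ n * r) ^ 2 := hsq _ hr_le
      _ ≤ (g r ^ 2 ^ n) ^ 2 := pow_le_pow_left₀ (hg _ hr_le) ih 2
      _ = g r ^ 2 ^ (n + 1) := by rw [← pow_mul, pow_succ]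

theorem le_exp_of_antitoneOn_of_le_exp_two_pow {g : ℝ → ℝ} {r b : ℝ} (hr : 0 < r) (hb : 0 ≤ b)
    (hg : AntitoneOn g (Ici r)) (hdyadic : ∀ n : ℕ, g (2 ^ n * r) ≤ exp (-(b * 2 ^ n)))
    {ρ : ℝ} (hρ : r ≤ ρ) :
    g ρ ≤ exp (-(b * (ρ / (2 * r)))) := by
  obtain ⟨n, hn_le, hlt_succ⟩ := exists_nat_pow_near ((one_le_div hr).2 hρ) one_lt_two
  have hlower : 2 ^ n * r ≤ ρ := (le_div_iff₀ hr).1 hn_le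
  have hupper : ρ / (2 * r) ≤ 2 ^ n := by
    rw [div_le_iff₀ (by positivity)]
    rw [div_lt_iff₀ hr, pow_succ] at hlt_succ
    linarith
  calc g ρ ≤ g (2 ^ n * r) :=
        hg (le_mul_of_one_le_left hr.le (one_le_pow₀ one_le_two)) hρ hlower
    _ ≤ exp (-(b * 2 ^ n)) := hdyadic n
    _ ≤ exp (-(b * (ρ / (2 * r)))) := by gcongr

theorem integrable_of_meas_lt_le_rpow_neg {α : Type*} [MeasurableSpace α] {μ : Measure α}
    [IsFiniteMeasure μ] {f : α → ℝ} (hf : AEMeasurable f μ) (hf0 : 0 ≤ᵐ[μ] f) {p T : ℝ}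
    (hp : 1 < p) (hT : 0 < T)
    (htail : ∀ t, T < t → μ {ω | t < f ω} ≤ ENNReal.ofReal (t ^ (-p))) :
    Integrable f μ := by
  refine ⟨hf.aestronglyMeasurable, ?_⟩
  rw [hasFiniteIntegral_iff_ofReal hf0, lintegral_eq_lintegral_meas_lt μ hf0 hf,
    ← Ioc_union_Ioi_eq_Ioi hT.le, lintegral_union measurableSet_Ioi (Ioc_disjoint_Ioi le_rfl)]
  refine ENNReal.add_lt_top.2 ⟨?_, ?_⟩
  · calc ∫⁻ t in Ioc 0 T, μ {ω | t < f ω} ≤ ∫⁻ _ in Ioc 0 T, μ univ :=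
          lintegral_mono fun _ => measure_mono (subset_univ _)
      _ < ⊤ := by
          rw [setLIntegral_const]
          exact ENNReal.mul_lt_top (measure_lt_top μ univ) measure_Ioc_lt_top
  · calc ∫⁻ t in Ioi T, μ {ω | t < f ω} ≤ ∫⁻ t in Ioi T, ENNReal.ofReal (t ^ (-p)) :=
          setLIntegral_mono' measurableSet_Ioi htail
      _ < ⊤ := (integrableOn_Ioi_rpow_of_lt (by linarith) hT).lintegral_lt_top

theorem integrable_exp_mul_of_measureReal_lt_le_exp {α : Type*} [MeasurableSpace α]
    {μ : Measure α} [IsFiniteMeasure μ] {X : α → ℝ} (hX : Measurable X) {c t₀ ε : ℝ}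
    (htail : ∀ t, t₀ ≤ t → μ.real {ω | t < X ω} ≤ exp (-(c * t))) (hε : 0 < ε) (hεc : ε < c) :
    Integrable (fun ω => exp (ε * X ω)) μ := by
  refine integrable_of_meas_lt_le_rpow_neg (by fun_prop) (.of_forall fun _ => (exp_pos _).le)
    ((one_lt_div hε).2 hεc) (exp_pos (ε * t₀)) fun t ht => ?_
  have ht0 : 0 < t := (exp_pos _).trans ht
  have hlevel : {ω | t < exp (ε * X ω)} = {ω | log t / ε < X ω} := by
    ext ω
    exact (log_lt_iff_lt_exp ht0).symm.trans (div_lt_iff₀' hε).symm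
  have ht₀ : t₀ ≤ log t / ε := by
    rw [le_div_iff₀' hε, ← log_exp (ε * t₀)]
    exact (log_lt_log (exp_pos _) ht).le
  rw [hlevel, ← ofReal_measureReal]
  refine ENNReal.ofReal_le_ofReal ((htail _ ht₀).trans_eq ?_)
  rw [rpow_def_of_pos ht0]
  congr 1
  field_simp

theorem integrable_exp_mul_of_nonpos {α : Type*} [MeasurableSpace α] {μ : Measure α}
    [IsFiniteMeasure μ] {X : α → ℝ} (hX : Measurable X) (hX0 : ∀ ω, 0 ≤ X ω) {ε : ℝ}
    (hε : ε ≤ 0) :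
    Integrable (fun ω => exp (ε * X ω)) μ :=
  (integrable_const 1).mono' (by fun_prop) (.of_forall fun ω => by
    rw [norm_of_nonneg (exp_pos _).le, exp_le_one_iff]
    exact mul_nonpos_of_nonpos_of_nonneg hε (hX0 ω))

/-- if the survival function Ps(ρ) = P(U > ρ) of a nonnegative random
variable U satisfies the doubling inequality Ps(2ρ) ≤ 2Ps(ρ)² for ρ ≥ r and Ps(r) = 1/4,
then E exp(εU) < ∞ (i.e. −∫_0^∞ e^{ερ} dPs(ρ) < ∞) for every ε < ln 2/(2r). -/
theorem exp_integrable_of_tail_doubling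
    {Ω : Type*} [MeasurableSpace Ω] (P : Measure Ω) [IsProbabilityMeasure P]
    (U : Ω → ℝ) (hU : Measurable U) (hU0 : ∀ ω, 0 ≤ U ω)
    (Ps : ℝ → ℝ) (hPs : ∀ ρ, Ps ρ = (P {ω | ρ < U ω}).toReal)
    (r : ℝ) (hr : 0 < r)
    (hdbl : ∀ ρ, r ≤ ρ → Ps (2 * ρ) ≤ 2 * (Ps ρ) ^ 2)
    (hPr : Ps r = 1 / 4)
    (ε : ℝ) (hε : ε < Real.log 2 / (2 * r)) :
    Integrable (fun ω => Real.exp (ε * U ω)) P := by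
  rcases le_or_gt ε 0 with hε0 | hε0
  · exact integrable_exp_mul_of_nonpos hU hU0 hε0
  have hPs_nonneg (ρ : ℝ) : 0 ≤ Ps ρ := hPs ρ ▸ ENNReal.toReal_nonneg
  have hPs_anti : Antitone Ps := fun a b hab => by
    rw [hPs, hPs]
    exact measureReal_mono fun ω (hω : b < U ω) => hab.trans_lt hω
  have hdyadic (n : ℕ) : 2 * Ps (2 ^ n * r) ≤ exp (-(log 2 * 2 ^ n)) := by
    calc 2 * Ps (2 ^ n * r) ≤ (2 * Ps r) ^ 2 ^ n :=
          le_pow_two_pow_of_le_sq (g := fun ρ => 2 * Ps ρ) hr.le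
            (fun ρ _ => by linarith [hPs_nonneg ρ]) (fun ρ hρ => by nlinarith [hdbl ρ hρ]) n
      _ = exp (-(log 2 * 2 ^ n)) := by
        rw [hPr, exp_neg, ← rpow_def_of_pos two_pos]
        norm_num [div_pow, ← rpow_natCast]
  have htail (ρ : ℝ) (hρ : r ≤ ρ) : P.real {ω | ρ < U ω} ≤ exp (-(log 2 / (2 * r) * ρ)) := by
    have h := le_exp_of_antitoneOn_of_le_exp_two_pow (g := fun ρ => 2 * Ps ρ) hr
      (log_pos one_lt_two).le (fun a _ b _ hab => by linarith [hPs_anti hab]) hdyadic hρ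
    rw [measureReal_def, ← hPs]
    calc Ps ρ ≤ 2 * Ps ρ := by linarith [hPs_nonneg ρ]
      _ ≤ exp (-(log 2 * (ρ / (2 * r)))) := h
      _ = exp (-(log 2 / (2 * r) * ρ)) := by ring_nf
  exact integrable_exp_mul_of_measureReal_lt_le_exp hU htail hε0 hε
end

section
/- Let u = ∑_l l^{-(s/d+1/2-1/q)} κ^{-1/q} ξ_l ψ_l with ξ_l i.i.d. with density ∝ exp(-|x|^q/2), q ≥ 1, s > d/q, and {ψ_l} an r-regular wavelet basis of L²(𝕋^d) with r > s. Then for any t < s - d/q there exists r* = r*(q,d,s,t) > 0 such that E[exp(α‖u‖_{C^t})] < ∞ for all α ∈ (0, κ/(2r*)). -/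
open MeasureTheory Real ProbabilityTheory

/-!
Write the draw's norm as `⨆ n, a n * |ξ n|` with `a n = (n + 1) ^ β * κ ^ (-1/q)`, where
`β = (t - s) / d + 1 / q < 0` is exactly the condition `t < s - d / q`. Above the threshold
`|ξ n| > 1 / a n` one has `exp (α * a n * |ξ n|) ≤ exp ((α * a n + ε) * |ξ n| - ε / a n)`, so
`exp (α * ⨆ n, a n * |ξ n|) ≤ exp α + ∑ n, exp ((α * a n + ε) * |ξ n| - ε / a n)`.
For `α * a n + ε < 1 / 2` the exponential moments of the density `∝ exp (-|x| ^ q / 2)` are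
bounded uniformly (as `|x| ^ q ≥ |x| - 1` for `q ≥ 1`), so the expectation of the right-hand side
is at most `exp α + K * ∑ n, exp (-ε / a n)`, and this series converges because `1 / a n` grows
like the positive power `(n + 1) ^ (-β)`.
-/

lemma summable_exp_neg_mul_rpow {ρ γ : ℝ} (hρ : 0 < ρ) (hγ : 0 < γ) :
    Summable fun n : ℕ => exp (-(ρ * (n : ℝ) ^ γ)) := by
  have hdecay := (isLittleO_exp_neg_mul_rpow_atTop hρ (-2 / γ)).comp_tendsto
    ((tendsto_rpow_atTop hγ).comp tendsto_natCast_atTop_atTop)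
  refine summable_of_isBigO_nat (g := fun n : ℕ => (n : ℝ) ^ (-2 : ℝ))
    (Real.summable_nat_rpow.2 (by norm_num)) ?_
  refine (hdecay.isBigO.congr_left fun n => ?_).congr_right fun n => ?_
  · simp [neg_mul]
  · simp only [Function.comp_apply]
    rw [← rpow_mul n.cast_nonneg, mul_div_cancel₀ _ hγ.ne']

lemma summable_exp_neg_div_rpow_succ_mul {β k ε : ℝ} (hβ : β < 0) (hk : 0 < k) (hε : 0 < ε) :
    Summable fun n : ℕ => exp (-(ε / (((n : ℝ) + 1) ^ β * k))) := by
  have := (summable_nat_add_iff 1).2 (summable_exp_neg_mul_rpow (div_pos hε hk) (neg_pos.2 hβ))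
  refine this.congr fun n => ?_
  push_cast
  rw [rpow_neg (by positivity)]
  ring_nf

lemma integrable_exp_neg_mul_abs {b : ℝ} (hb : 0 < b) :
    Integrable fun x : ℝ => exp (-(b * |x|)) := by
  -- a non-integrable function has integral `0`, while `∫ exp (-b|x|) = 2 / b`
  refine Integrable.of_integral_ne_zero ?_
  rw [integral_comp_abs (f := fun x => exp (-(b * x)))]
  simp_rw [← neg_mul]
  rw [integral_exp_mul_Ioi (neg_neg_of_pos hb)]
  simp [hb.ne']

lemma sub_one_le_rpow {y q : ℝ} (hy : 0 ≤ y) (hq : 1 ≤ q) : y - 1 ≤ y ^ q := by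
  rcases le_total y 1 with h | h
  · linarith [rpow_nonneg hy q]
  · linarith [self_le_rpow_of_one_le h hq]

lemma lintegral_exp_mul_abs_withDensity_lt_top {c q θ : ℝ} (hq : 1 ≤ q) (hθ : θ < 1 / 2) :
    ∫⁻ x, ENNReal.ofReal (exp (θ * |x|))
      ∂volume.withDensity (fun x => ENNReal.ofReal (c * exp (-(|x| ^ q) / 2))) < ⊤ := by
  have hdens : Measurable fun x : ℝ => ENNReal.ofReal (c * exp (-(|x| ^ q) / 2)) := by
    fun_prop
  rw [lintegral_withDensity_eq_lintegral_mul _ hdens (by fun_prop)]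
  have hbound : ∀ x : ℝ, -(|x| ^ q) / 2 + θ * |x| ≤ 1 / 2 + -((1 / 2 - θ) * |x|) := fun x => by
    linarith [sub_one_le_rpow (abs_nonneg x) hq]
  calc ∫⁻ x, ENNReal.ofReal (c * exp (-(|x| ^ q) / 2)) * ENNReal.ofReal (exp (θ * |x|))
      ≤ ∫⁻ x, ENNReal.ofReal c * ENNReal.ofReal (exp (1 / 2) * exp (-((1 / 2 - θ) * |x|))) := by
        refine lintegral_mono fun x => ?_
        rw [ENNReal.ofReal_mul' (exp_pos _).le, mul_assoc, ← ENNReal.ofReal_mul (exp_pos _).le,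
          ← exp_add, ← exp_add]
        gcongr ENNReal.ofReal c * ENNReal.ofReal (exp ?_)
        exact hbound x
    _ = ENNReal.ofReal c * (ENNReal.ofReal (exp (1 / 2)) *
          ∫⁻ x, ENNReal.ofReal (exp (-((1 / 2 - θ) * |x|)))) := by
        simp_rw [ENNReal.ofReal_mul (exp_pos _).le]
        rw [lintegral_const_mul' _ _ ENNReal.ofReal_ne_top,
          lintegral_const_mul' _ _ ENNReal.ofReal_ne_top]
    _ < ⊤ := by
        have := (integrable_exp_neg_mul_abs (b := 1 / 2 - θ) (by linarith)).lintegral_lt_top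
        finiteness

lemma exp_mul_le_max_of_threshold {α ε a y : ℝ} (hα : 0 ≤ α) (hε : 0 ≤ ε) (ha : 0 < a) :
    exp (α * (a * y)) ≤ max (exp α) (exp ((α * a + ε) * y - ε / a)) := by
  rcases le_or_gt (a * y) 1 with hy | hy
  · exact le_max_of_le_left (exp_le_exp.2 (by nlinarith))
  · refine le_max_of_le_right (exp_le_exp.2 ?_)
    have hy' : 1 / a < y := by rwa [div_lt_iff₀ ha, mul_comm]
    have hεy : ε / a ≤ ε * y := by
      rw [div_eq_mul_one_div]; exact mul_le_mul_of_nonneg_left hy'.le hε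
    nlinarith

lemma ofReal_exp_mul_iSup_le {α C : ℝ} (hα : 0 < α) (hC : 1 ≤ C) {x g : ℕ → ℝ}
    (h : ∀ n, exp (α * x n) ≤ max C (g n)) :
    ENNReal.ofReal (exp (α * ⨆ n, x n)) ≤ ENNReal.ofReal C + ∑' n, ENNReal.ofReal (g n) := by
  set T := ∑' n, ENNReal.ofReal (g n)
  rcases eq_or_ne T ⊤ with hT | hT
  · simp [hT]
  have hB : 1 ≤ C + T.toReal := le_add_of_le_of_nonneg hC ENNReal.toReal_nonneg
  have hterm : ∀ n, α * x n ≤ log (C + T.toReal) := fun n => by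
    rw [le_log_iff_exp_le (by linarith)]
    refine (h n).trans (max_le (le_add_of_nonneg_right ENNReal.toReal_nonneg) ?_)
    exact ((ENNReal.ofReal_le_iff_le_toReal hT).1 (ENNReal.le_tsum n)).trans
      (le_add_of_nonneg_left (by linarith))
  have hsup : α * ⨆ n, x n ≤ log (C + T.toReal) := by
    rw [← le_div_iff₀' hα]
    exact Real.iSup_le (fun n => by rw [le_div_iff₀' hα]; exact hterm n)
      (div_nonneg (log_nonneg hB) hα.le)
  calc ENNReal.ofReal (exp (α * ⨆ n, x n)) ≤ ENNReal.ofReal (C + T.toReal) :=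
        ENNReal.ofReal_le_ofReal ((exp_le_exp.2 hsup).trans_eq (exp_log (by linarith)))
    _ ≤ ENNReal.ofReal C + T := by
        rw [ENNReal.ofReal_add (by linarith) ENNReal.toReal_nonneg, ENNReal.ofReal_toReal hT]

lemma lintegral_exp_sub_le {Ω : Type*} [MeasurableSpace Ω] {P : Measure Ω} {f : Ω → ℝ}
    {m : ℝ} {K : ENNReal} (hK : ∫⁻ ω, ENNReal.ofReal (exp (f ω)) ∂P ≤ K) :
    ∫⁻ ω, ENNReal.ofReal (exp (f ω - m)) ∂P ≤ ENNReal.ofReal (exp (-m)) * K := by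
  simp_rw [sub_eq_neg_add, exp_add, ENNReal.ofReal_mul (exp_pos _).le]
  rw [lintegral_const_mul' _ _ ENNReal.ofReal_ne_top]
  gcongr

theorem integrable_exp_mul_iSup_mul_abs {Ω : Type*} [MeasurableSpace Ω] {P : Measure Ω}
    [IsFiniteMeasure P] {X : ℕ → Ω → ℝ} (hX : ∀ n, Measurable (X n)) {a : ℕ → ℝ}
    (ha : ∀ n, 0 < a n) {α ε : ℝ} (hα : 0 < α) (hε : 0 ≤ ε) {K : ENNReal} (hK : K ≠ ⊤)
    (hmom : ∀ n, ∫⁻ ω, ENNReal.ofReal (exp ((α * a n + ε) * |X n ω|)) ∂P ≤ K)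
    (hsum : Summable fun n => exp (-(ε / a n))) :
    Integrable (fun ω => exp (α * ⨆ n, a n * |X n ω|)) P := by
  have hmeas : Measurable fun ω => exp (α * ⨆ n, a n * |X n ω|) := by
    have := Measurable.iSup fun n => (hX n).abs.const_mul (a n)
    fun_prop
  refine ⟨hmeas.aestronglyMeasurable, ?_⟩
  rw [hasFiniteIntegral_iff_ofReal (.of_forall fun ω => (exp_pos _).le)]
  calc ∫⁻ ω, ENNReal.ofReal (exp (α * ⨆ n, a n * |X n ω|)) ∂P
      ≤ ∫⁻ ω, (ENNReal.ofReal (exp α) +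
          ∑' n, ENNReal.ofReal (exp ((α * a n + ε) * |X n ω| - ε / a n))) ∂P :=
        lintegral_mono fun ω => ofReal_exp_mul_iSup_le hα (one_le_exp hα.le)
          fun n => exp_mul_le_max_of_threshold hα.le hε (ha n)
    _ = ENNReal.ofReal (exp α) * P Set.univ +
          ∑' n, ∫⁻ ω, ENNReal.ofReal (exp ((α * a n + ε) * |X n ω| - ε / a n)) ∂P := by
        rw [lintegral_add_left measurable_const, lintegral_const,
          lintegral_tsum fun n => by fun_prop]
    _ ≤ ENNReal.ofReal (exp α) * P Set.univ + ∑' n, ENNReal.ofReal (exp (-(ε / a n))) * K := by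
        gcongr with n
        exact lintegral_exp_sub_le (hmom n)
    _ < ⊤ := by
        rw [ENNReal.tsum_mul_right, ← ENNReal.ofReal_tsum_of_nonneg (fun n => (exp_pos _).le) hsum]
        finiteness

theorem besov_fernique_general
    {Ω : Type*} [MeasurableSpace Ω] (P : Measure Ω) [IsProbabilityMeasure P]
    (q s t κ : ℝ) (d : ℕ) (hd : 1 ≤ d) (hq : 1 ≤ q) (hκ : 0 < κ)
    (ht : t < s - (d : ℝ) / q)
    (c : ℝ)
    (ξ : ℕ → Ω → ℝ) (hmeas : ∀ l, Measurable (ξ l))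
    (hdens : ∀ l, Measure.map (ξ l) P
      = volume.withDensity (fun x => ENNReal.ofReal (c * Real.exp (-(|x| ^ q) / 2)))) :
    ∃ rstar : ℝ, 0 < rstar ∧ ∀ α : ℝ, 0 < α → α < κ / (2 * rstar) →
      Integrable (fun ω => Real.exp (α *
        ⨆ n : ℕ, ((n : ℝ) + 1) ^ ((t - s) / (d : ℝ) + 1 / q) * κ ^ (-(1 / q)) * |ξ n ω|)) P := by
  set k := κ ^ (-(1 / q))
  have hk : 0 < k := rpow_pos_of_pos hκ _
  set β := (t - s) / (d : ℝ) + 1 / q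
  have hβ : β < 0 := by
    have : (t - s) / d < -(1 / q) := by
      rw [div_lt_iff₀ (by exact_mod_cast hd)]
      calc t - s < -(d / q) := by linarith
        _ = -(1 / q) * d := by ring
    linarith
  -- `κ / (2 * rstar) = 1 / (4 * k)`, so `α * a n ≤ 1 / 4` and `α * a n + 1 / 8 ≤ 3 / 8 < 1 / 2`
  refine ⟨2 * κ * k, by positivity, fun α hα hαlt => ?_⟩
  have hαk : α * k ≤ 1 / 4 := by
    rw [lt_div_iff₀ (by positivity)] at hαlt
    nlinarith
  have ha_le : ∀ n : ℕ, ((n : ℝ) + 1) ^ β * k ≤ k := fun n =>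
    mul_le_of_le_one_left hk.le (rpow_le_one_of_one_le_of_nonpos (by simp) hβ.le)
  refine integrable_exp_mul_iSup_mul_abs hmeas (fun n => by positivity) hα (ε := 1 / 8)
    (by norm_num) (lintegral_exp_mul_abs_withDensity_lt_top (c := c) (θ := 3 / 8) hq
      (by norm_num)).ne (fun n => ?_) (summable_exp_neg_div_rpow_succ_mul hβ hk (by norm_num))
  rw [← hdens n, lintegral_map (by fun_prop) (hmeas n)]
  refine lintegral_mono fun ω => ENNReal.ofReal_le_ofReal (exp_le_exp.2 ?_)
  gcongr
  nlinarith [ha_le n]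

/-- Fernique-like theorem for Besov priors, Theorem 2.3:
for u = ∑_l l^{-(s/d+1/2-1/q)} κ^{-1/q} ξ_l ψ_l with ξ_l i.i.d. of density ∝ exp(-|x|^q/2),
s > d/q, and t < s - d/q, there is r* = r*(q,d,s,t) > 0 such that
E exp(α‖u‖_{C^t}) < ∞ for all 0 < α < κ/(2r*).  Here the Hölder norm of the draw is
‖u‖_{C^t} = ‖u‖_{B^t_{∞,∞}} = sup_l l^{(t-s)/d+1/q} κ^{-1/q} |ξ_l|. -/
theorem besov_fernique
    {Ω : Type*} [MeasurableSpace Ω] (P : Measure Ω) [IsProbabilityMeasure P]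
    (q s t κ : ℝ) (d : ℕ) (hd : 1 ≤ d) (hq : 1 ≤ q) (hκ : 0 < κ)
    (hs : (d : ℝ) / q < s) (ht : t < s - (d : ℝ) / q)
    (c : ℝ) (hc : 0 < c)
    (ξ : ℕ → Ω → ℝ) (hmeas : ∀ l, Measurable (ξ l))
    (hindep : iIndepFun ξ P)
    (hdens : ∀ l, Measure.map (ξ l) P
      = volume.withDensity (fun x => ENNReal.ofReal (c * Real.exp (-(|x| ^ q) / 2)))) :
    ∃ rstar : ℝ, 0 < rstar ∧ ∀ α : ℝ, 0 < α → α < κ / (2 * rstar) →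
      Integrable (fun ω => Real.exp (α *
        ⨆ n : ℕ, ((n : ℝ) + 1) ^ ((t - s) / (d : ℝ) + 1 / q) * κ ^ (-(1 / q)) * |ξ n ω|)) P :=
  besov_fernique_general P q s t κ d hd hq hκ ht c ξ hmeas hdens
end

section
/- Let μ₀ be a Borel probability measure on a separable Banach space X with E^{μ₀}[exp(α‖u‖_X)] < ∞ for some α > α₁. Let Φ: X → ℝ be continuous and satisfy Φ(u) ≥ M − α₁‖u‖_X for a constant M, and Φ(u) ≤ K(r) whenever ‖u‖_X < r. Then Z = ∫_X exp(−Φ(u)) μ₀(du) is finite and strictly positive. -/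
open MeasureTheory Real

/-- core of Theorem 3.2: if μ₀ is a Borel probability measure on a
separable Banach space X with E exp(α‖u‖) < ∞ for some α > α₁, and Φ is continuous,
bounded below by M − α₁‖u‖ and bounded above on bounded sets, then the normalizing
constant Z = ∫ exp(−Φ) dμ₀ is finite and strictly positive. -/
theorem normalizing_constant_pos_finite
    {X : Type*} [NormedAddCommGroup X] [NormedSpace ℝ X]
    [MeasurableSpace X] [BorelSpace X] [TopologicalSpace.SeparableSpace X]
    (μ0 : Measure X) [IsProbabilityMeasure μ0]
    (α α₁ : ℝ) (hα₁ : 0 < α₁) (hαα₁ : α₁ < α)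
    (hexp : Integrable (fun u => Real.exp (α * ‖u‖)) μ0)
    (Φ : X → ℝ) (hΦcont : Continuous Φ)
    (M : ℝ) (hlow : ∀ u, M - α₁ * ‖u‖ ≤ Φ u)
    (K : ℝ → ℝ) (hupp : ∀ r : ℝ, 0 < r → ∀ u, ‖u‖ < r → Φ u ≤ K r) :
    Integrable (fun u => Real.exp (-Φ u)) μ0 ∧ 0 < ∫ u, Real.exp (-Φ u) ∂μ0 := by
  have hint : Integrable (fun u => Real.exp (-Φ u)) μ0 := by
    have hmeas : AEStronglyMeasurable (fun u => Real.exp (-Φ u)) μ0 :=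
      (Real.continuous_exp.comp hΦcont.neg).aestronglyMeasurable
    refine Integrable.mono' (hexp.const_mul (Real.exp (-M))) hmeas ?_
    filter_upwards with u
    rw [Real.norm_eq_abs, abs_of_pos (Real.exp_pos _), ← Real.exp_add]
    apply Real.exp_le_exp.mpr
    have := hlow u
    have h2 : α₁ * ‖u‖ ≤ α * ‖u‖ :=
      mul_le_mul_of_nonneg_right hαα₁.le (norm_nonneg u)
    linarith
  refine ⟨hint, ?_⟩
  rw [integral_pos_iff_support_of_nonneg (fun u => (Real.exp_pos _).le) hint]
  have : Function.support (fun u : X => Real.exp (-Φ u)) = Set.univ :=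
    Set.eq_univ_of_forall fun u => (Real.exp_pos _).ne'
  rw [this]
  simp
end

section
/- Let μ₀ be a probability measure on Banach space X satisfying an exponential moment bound E^{μ₀}[exp(β‖u‖_X)] < ∞ for all β ≤ α₁ + 2α₂. Suppose Φ: X × Y → ℝ satisfies Φ(u,y) ≥ M(r) − α₁‖u‖_X for ‖y‖_Y < r, and |Φ(u,y₁) − Φ(u,y₂)| ≤ exp(α₂‖u‖_X + C)‖y₁−y₂‖_Y for ‖y₁‖,‖y₂‖ < r. Then the normalizing constants Z(y) = ∫ exp(−Φ(u,y)) dμ₀ satisfy the Lipschitz bound |Z(y) − Z(y')| ≤ C(r)‖y−y'‖_Y for ‖y‖,‖y'‖ ≤ r. -/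
/-!
Since `exp` is increasing and convex, `|exp a - exp b| ≤ |a - b| exp (max a b)`. With
`a, b = -Φ(u, y), -Φ(u, y')` the lower bound on `Φ` controls `exp (max a b)` by
`exp (α₁‖u‖ - M)` and the Lipschitz bound controls `|a - b|` by `exp (α₂‖u‖ + C) ‖y - y'‖`,
so the integrands differ by at most `exp (C - M) exp ((α₁ + α₂)‖u‖) ‖y - y'‖`, which is
integrable by the exponential moment bound. Working with radius `r + 1` turns `‖y‖ ≤ r` into the
strict inequality the hypotheses ask for.
-/

open MeasureTheory Real

lemma Real.abs_exp_sub_exp_le (a b : ℝ) : |exp a - exp b| ≤ |a - b| * exp (max a b) := by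
  wlog hab : a ≤ b generalizing a b
  · simpa only [abs_sub_comm, max_comm] using this b a (le_of_not_ge hab)
  have h_one_sub : 1 - exp (a - b) ≤ b - a := by linarith [add_one_le_exp (a - b)]
  have h_split : exp a = exp b * exp (a - b) := by rw [← exp_add, add_sub_cancel]
  rw [abs_sub_comm, abs_of_nonneg (sub_nonneg.2 (exp_le_exp.2 hab)), abs_sub_comm,
    abs_of_nonneg (sub_nonneg.2 hab), max_eq_right hab, h_split]
  nlinarith [exp_pos b]

lemma Real.abs_exp_neg_sub_exp_neg_le {a b m t L : ℝ} (ha : m - t ≤ a) (hb : m - t ≤ b)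
    (hL : |a - b| ≤ L) : |exp (-a) - exp (-b)| ≤ L * exp (t - m) := by
  calc |exp (-a) - exp (-b)| ≤ |-a - -b| * exp (max (-a) (-b)) := abs_exp_sub_exp_le _ _
    _ ≤ L * exp (t - m) := by
      rw [neg_sub_neg, abs_sub_comm]
      exact mul_le_mul hL (exp_le_exp.2 (max_le (by linarith) (by linarith))) (exp_pos _).le
        ((abs_nonneg _).trans hL)

lemma MeasureTheory.abs_integral_sub_le_of_abs_sub_le {X : Type*} [MeasurableSpace X]
    {μ : Measure X} {f g G : X → ℝ} (hf : Integrable f μ) (hg : Integrable g μ)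
    (hG : Integrable G μ) {d : ℝ} (hfg : ∀ u, |f u - g u| ≤ G u * d) :
    |(∫ u, f u ∂μ) - ∫ u, g u ∂μ| ≤ (∫ u, G u ∂μ) * d := by
  calc |(∫ u, f u ∂μ) - ∫ u, g u ∂μ| = |∫ u, (f u - g u) ∂μ| := by rw [integral_sub hf hg]
    _ ≤ ∫ u, |f u - g u| ∂μ := abs_integral_le_integral_abs
    _ ≤ ∫ u, G u * d ∂μ := integral_mono (hf.sub hg).abs (hG.mul_const d) hfg
    _ = (∫ u, G u ∂μ) * d := integral_mul_const d G

lemma MeasureTheory.integrable_exp_neg_of_lower_bound {X : Type*} [MeasurableSpace X]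
    [NormedAddCommGroup X] {μ : Measure X} {f : X → ℝ} (hf : Measurable f) {m α : ℝ}
    (hα : Integrable (fun u => exp (α * ‖u‖)) μ) (hlow : ∀ u, m - α * ‖u‖ ≤ f u) :
    Integrable (fun u => exp (-f u)) μ := by
  refine (hα.const_mul (exp (-m))).mono' hf.neg.exp.aestronglyMeasurable
    (Filter.Eventually.of_forall fun u => ?_)
  rw [norm_of_nonneg (exp_pos _).le, ← exp_add]
  exact exp_le_exp.2 (by linarith [hlow u])

theorem evidence_lipschitz_general
    {X Y : Type*} [NormedAddCommGroup X] [NormedAddCommGroup Y] [MeasurableSpace X]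
    (μ0 : Measure X) [IsProbabilityMeasure μ0]
    (α₁ α₂ C : ℝ) (hα₂ : 0 ≤ α₂)
    (hexp : ∀ β : ℝ, β ≤ α₁ + 2 * α₂ → Integrable (fun u => Real.exp (β * ‖u‖)) μ0)
    (Φ : X → Y → ℝ) (hΦmeas : ∀ y, Measurable fun u => Φ u y)
    (M : ℝ → ℝ) (hlow : ∀ r : ℝ, ∀ u y, ‖y‖ < r → M r - α₁ * ‖u‖ ≤ Φ u y)
    (hlip : ∀ r : ℝ, ∀ u y₁ y₂, ‖y₁‖ < r → ‖y₂‖ < r →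
      |Φ u y₁ - Φ u y₂| ≤ Real.exp (α₂ * ‖u‖ + C) * ‖y₁ - y₂‖) :
    ∀ r : ℝ, 0 < r → ∃ Cr : ℝ, ∀ y y' : Y, ‖y‖ ≤ r → ‖y'‖ ≤ r →
      |(∫ u, Real.exp (-Φ u y) ∂μ0) - ∫ u, Real.exp (-Φ u y') ∂μ0|
        ≤ Cr * ‖y - y'‖ := by
  intro r _
  set G : X → ℝ := fun u => exp (C - M (r + 1)) * exp ((α₁ + α₂) * ‖u‖)
  refine ⟨∫ u, G u ∂μ0, fun y y' hy hy' => ?_⟩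
  have hy : ‖y‖ < r + 1 := by linarith
  have hy' : ‖y'‖ < r + 1 := by linarith
  have h_int : ∀ z : Y, ‖z‖ < r + 1 → Integrable (fun u => exp (-Φ u z)) μ0 := fun z hz =>
    integrable_exp_neg_of_lower_bound (hΦmeas z) (hexp α₁ (by linarith))
      (fun u => hlow _ u z hz)
  have hG : Integrable G μ0 := (hexp (α₁ + α₂) (by linarith)).const_mul _
  refine abs_integral_sub_le_of_abs_sub_le (h_int y hy) (h_int y' hy') hG fun u => ?_
  calc |exp (-Φ u y) - exp (-Φ u y')|
      ≤ exp (α₂ * ‖u‖ + C) * ‖y - y'‖ * exp (α₁ * ‖u‖ - M (r + 1)) :=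
        abs_exp_neg_sub_exp_neg_le (hlow _ u y hy) (hlow _ u y' hy') (hlip _ u y y' hy hy')
    _ = G u * ‖y - y'‖ := by
        simp only [G, ← exp_add]
        rw [mul_right_comm, ← exp_add]
        ring_nf

/-- inequality (normineq) in Theorem 3.3: local Lipschitz continuity of
the evidence Z(y) = ∫ exp(−Φ(u,y)) dμ₀ in the data y, under the lower bound
Φ(u,y) ≥ M(r) − α₁‖u‖ (for ‖y‖ < r), the Lipschitz-in-y bound with constant
exp(α₂‖u‖ + C), and the exponential moment bound on μ₀ for all β ≤ α₁ + 2α₂. -/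
theorem evidence_lipschitz
    {X Y : Type*} [NormedAddCommGroup X] [NormedAddCommGroup Y] [MeasurableSpace X]
    (μ0 : Measure X) [IsProbabilityMeasure μ0]
    (α₁ α₂ C : ℝ) (hα₁ : 0 ≤ α₁) (hα₂ : 0 ≤ α₂)
    (hexp : ∀ β : ℝ, β ≤ α₁ + 2 * α₂ → Integrable (fun u => Real.exp (β * ‖u‖)) μ0)
    (Φ : X → Y → ℝ) (hΦmeas : ∀ y, Measurable fun u => Φ u y)
    (M : ℝ → ℝ) (hlow : ∀ r : ℝ, ∀ u y, ‖y‖ < r → M r - α₁ * ‖u‖ ≤ Φ u y)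
    (hlip : ∀ r : ℝ, ∀ u y₁ y₂, ‖y₁‖ < r → ‖y₂‖ < r →
      |Φ u y₁ - Φ u y₂| ≤ Real.exp (α₂ * ‖u‖ + C) * ‖y₁ - y₂‖) :
    ∀ r : ℝ, 0 < r → ∃ Cr : ℝ, ∀ y y' : Y, ‖y‖ ≤ r → ‖y'‖ ≤ r →
      |(∫ u, Real.exp (-Φ u y) ∂μ0) - ∫ u, Real.exp (-Φ u y') ∂μ0|
        ≤ Cr * ‖y - y'‖ :=
  evidence_lipschitz_general μ0 α₁ α₂ C hα₂ hexp Φ hΦmeas M hlow hlip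
end

section
/- Under Assumptions (i)–(iv) on Φ (lower bound Φ ≥ M − α₁‖u‖_X, local boundedness above, local Lipschitz in u, and Lipschitz in y with constant exp(α₂‖u‖_X + C)), and with μ₀ a (κ, X^{s,q}) Besov prior with s > t + d/q and κ > 2 c_e r*(α₁ + 2α₂) where C^t embeds continuously in X with constant c_e, the posterior measures μ^y defined by dμ^y/dμ₀ ∝ exp(−Φ(u;y)) satisfy d_Hell(μ^y, μ^{y'}) ≤ C(r)‖y − y'‖_Y for all ‖y‖_Y, ‖y'‖_Y ≤ r. -/
/-!
Write `Z y = ∫ exp (-Φ u y) dμ₀`. Splitting `√(e^{-Φ y}/Z y) - √(e^{-Φ y'}/Z y')` into the change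
of the unnormalised root density `e^{-Φ/2}` and the change of `(Z y)^{-1/2}`, the squared
Hellinger distance is at most `2/z ∫ (e^{-Φ y/2} - e^{-Φ y'/2})² + Z y' (Z y - Z y')² / (2 z³)`,
where `z` is a lower bound for the normalising constants on the ball of radius `r`. Assumption (i)
bounds `e^{-Φ}` by `e^{α₁‖u‖}` and assumption (iv) makes both terms `O(e^{(α₁ + 2α₂)‖u‖} ‖y - y'‖²)`;
the condition on `κ` makes this weight `μ₀`-integrable, and (iv) at `y = 0` provides `z`.
-/

open MeasureTheory Real

lemma Real.abs_exp_sub_exp_le_of_le {s t c : ℝ} (hs : s ≤ c) (ht : t ≤ c) :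
    |exp s - exp t| ≤ exp c * |s - t| := by
  wlog hts : t ≤ s generalizing s t
  · rw [abs_sub_comm, abs_sub_comm s]
    exact this ht hs (le_of_not_ge hts)
  rw [abs_of_nonneg (sub_nonneg.2 (exp_le_exp.2 hts)), abs_of_nonneg (sub_nonneg.2 hts)]
  calc exp s - exp t = exp s * (1 - exp (t - s)) := by rw [mul_sub, ← exp_add]; ring_nf
    _ ≤ exp s * (s - t) :=
        mul_le_mul_of_nonneg_left (by linarith [add_one_le_exp (t - s)]) (exp_nonneg s)
    _ ≤ exp c * (s - t) := mul_le_mul_of_nonneg_right (exp_le_exp.2 hs) (sub_nonneg.2 hts)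

lemma sq_inv_sqrt_sub_inv_sqrt_le {x y z : ℝ} (hz : 0 < z) (hx : z ≤ x) (hy : z ≤ y) :
    ((√x)⁻¹ - (√y)⁻¹) ^ 2 ≤ (x - y) ^ 2 / (4 * z ^ 3) := by
  obtain ⟨c, hc, rfl⟩ : ∃ c, 0 < c ∧ z = c ^ 2 := ⟨√z, sqrt_pos.2 hz, (sq_sqrt hz.le).symm⟩
  obtain ⟨a, ha, rfl⟩ : ∃ a, c ≤ a ∧ x = a ^ 2 :=
    ⟨√x, by simpa [sqrt_sq hc.le] using sqrt_le_sqrt hx, (sq_sqrt (hz.le.trans hx)).symm⟩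
  obtain ⟨b, hb, rfl⟩ : ∃ b, c ≤ b ∧ y = b ^ 2 :=
    ⟨√y, by simpa [sqrt_sq hc.le] using sqrt_le_sqrt hy, (sq_sqrt (hz.le.trans hy)).symm⟩
  have ha0 : 0 < a := hc.trans_le ha
  have hb0 : 0 < b := hc.trans_le hb
  rw [sqrt_sq ha0.le, sqrt_sq hb0.le]
  have hdiff : (a⁻¹ - b⁻¹) ^ 2 = (a ^ 2 - b ^ 2) ^ 2 / (a ^ 2 * b ^ 2 * (a + b) ^ 2) := by
    field_simp
    ring
  rw [hdiff]
  refine div_le_div_of_nonneg_left (sq_nonneg _) (by positivity) ?_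
  calc 4 * (c ^ 2) ^ 3 = c ^ 2 * c ^ 2 * (c + c) ^ 2 := by ring
    _ ≤ a ^ 2 * b ^ 2 * (a + b) ^ 2 := by gcongr

lemma sq_sqrt_div_sub_sqrt_div_le {a b Z W : ℝ} (hb : 0 ≤ b) (hZ : 0 ≤ Z) (hW : 0 ≤ W) :
    (√(a / Z) - √(b / W)) ^ 2 ≤ 2 * (√a - √b) ^ 2 / Z + 2 * b * ((√Z)⁻¹ - (√W)⁻¹) ^ 2 := by
  have hsplit : √(a / Z) - √(b / W) = (√a - √b) * (√Z)⁻¹ + √b * ((√Z)⁻¹ - (√W)⁻¹) := by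
    rw [sqrt_div' a hZ, sqrt_div' b hW]
    ring
  rw [hsplit]
  refine add_sq_le.trans_eq ?_
  rw [mul_pow, mul_pow, inv_pow, sq_sqrt hZ, sq_sqrt hb]
  ring

section Normalization

variable {α : Type*} [MeasurableSpace α] {μ : Measure α}

lemma aemeasurable_of_integrable_exp_mul {f : α → ℝ} {c : ℝ} (hc : c ≠ 0)
    (h : Integrable (fun u => exp (c * f u)) μ) : AEMeasurable f μ := by
  have hlog := (measurable_log.comp_aemeasurable h.aemeasurable).div_const c
  convert hlog using 1
  funext u
  simp [log_exp, hc]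

lemma exists_pos_le_integral_exp_neg [NeZero μ] {ψ b : α → ℝ}
    (hψ : Integrable (fun u => exp (-ψ u)) μ) (hψm : AEMeasurable ψ μ) (hbm : AEMeasurable b μ)
    (hb : ∀ u, 0 ≤ b u) :
    ∃ z, 0 < z ∧ ∀ φ : α → ℝ, Integrable (fun u => exp (-φ u)) μ →
      (∀ u, φ u ≤ ψ u + b u) → z ≤ ∫ u, exp (-φ u) ∂μ := by
  have hint : Integrable (fun u => exp (-(ψ u + b u))) μ := by
    refine hψ.mono' (hψm.add hbm).neg.exp.aestronglyMeasurable (ae_of_all μ fun u => ?_)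
    rw [norm_of_nonneg (exp_nonneg _)]
    exact exp_le_exp.2 (by linarith [hb u])
  exact ⟨_, integral_exp_pos hint, fun φ hφ hle =>
    integral_mono hint hφ fun u => exp_le_exp.2 (neg_le_neg (hle u))⟩

lemma integral_sq_sqrt_normalized_sub_le {f g : α → ℝ} (hf : ∀ u, 0 ≤ f u) (hg : ∀ u, 0 ≤ g u)
    (hfi : Integrable f μ) (hgi : Integrable g μ) {z : ℝ} (hz : 0 < z)
    (hzf : z ≤ ∫ u, f u ∂μ) (hzg : z ≤ ∫ u, g u ∂μ) :
    ∫ u, (√(f u / ∫ v, f v ∂μ) - √(g u / ∫ v, g v ∂μ)) ^ 2 ∂μ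
      ≤ 2 / z * ∫ u, (√(f u) - √(g u)) ^ 2 ∂μ
        + (∫ u, g u ∂μ) * ((∫ u, f u ∂μ) - ∫ u, g u ∂μ) ^ 2 / (2 * z ^ 3) := by
  set Zf := ∫ u, f u ∂μ
  set Zg := ∫ u, g u ∂μ
  have hsq : Integrable (fun u => (√(f u) - √(g u)) ^ 2) μ := by
    refine (hfi.add hgi).mono'
      ((hfi.aemeasurable.sqrt.sub hgi.aemeasurable.sqrt).pow_const 2).aestronglyMeasurable
      (ae_of_all μ fun u => ?_)
    rw [norm_of_nonneg (sq_nonneg _), Pi.add_apply]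
    nlinarith [sq_sqrt (hf u), sq_sqrt (hg u), sqrt_nonneg (f u), sqrt_nonneg (g u)]
  have hI : 0 ≤ ∫ u, (√(f u) - √(g u)) ^ 2 ∂μ := integral_nonneg fun u => sq_nonneg _
  calc ∫ u, (√(f u / Zf) - √(g u / Zg)) ^ 2 ∂μ
      ≤ ∫ u, (2 * (√(f u) - √(g u)) ^ 2 / Zf + 2 * g u * ((√Zf)⁻¹ - (√Zg)⁻¹) ^ 2) ∂μ :=
        integral_mono_of_nonneg (ae_of_all μ fun u => sq_nonneg _)
          (((hsq.const_mul 2).div_const Zf).add ((hgi.const_mul 2).mul_const _))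
          (ae_of_all μ fun u =>
            sq_sqrt_div_sub_sqrt_div_le (hg u) (hz.le.trans hzf) (hz.le.trans hzg))
    _ = 2 / Zf * ∫ u, (√(f u) - √(g u)) ^ 2 ∂μ + 2 * Zg * ((√Zf)⁻¹ - (√Zg)⁻¹) ^ 2 := by
        rw [integral_add ((hsq.const_mul 2).div_const Zf) ((hgi.const_mul 2).mul_const _),
          integral_div, integral_mul_const, integral_const_mul, integral_const_mul]
        ring
    _ ≤ 2 / z * ∫ u, (√(f u) - √(g u)) ^ 2 ∂μ + 2 * Zg * ((Zf - Zg) ^ 2 / (4 * z ^ 3)) := by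
        have hZg : 0 ≤ Zg := hz.le.trans hzg
        gcongr
        exact sq_inv_sqrt_sub_inv_sqrt_le hz hzf hzg
    _ = _ := by ring

end Normalization

section Potential

variable {m α₁ α₂ γ C δ : ℝ}

lemma exp_neg_le_of_affine_le {t p : ℝ} (ht : 0 ≤ t) (hγ : α₁ ≤ γ) (hp : m - α₁ * t ≤ p) :
    exp (-p) ≤ exp (-m) * exp (γ * t) := by
  rw [← exp_add]
  exact exp_le_exp.2 (by nlinarith)

lemma abs_exp_neg_sub_exp_neg_le {t p q : ℝ} (ht : 0 ≤ t) (hγ : α₁ + α₂ ≤ γ)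
    (hp : m - α₁ * t ≤ p) (hq : m - α₁ * t ≤ q) (hpq : |p - q| ≤ exp (α₂ * t + C) * δ) :
    |exp (-p) - exp (-q)| ≤ exp (C - m) * δ * exp (γ * t) := by
  have hδ : 0 ≤ δ := nonneg_of_mul_nonneg_right ((abs_nonneg _).trans hpq) (exp_pos _)
  calc |exp (-p) - exp (-q)| ≤ exp (α₁ * t - m) * |-p - -q| :=
        abs_exp_sub_exp_le_of_le (by linarith) (by linarith)
    _ ≤ exp (α₁ * t - m) * (exp (α₂ * t + C) * δ) := by
        rw [neg_sub_neg, abs_sub_comm]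
        gcongr
    _ = exp (C - m) * δ * exp ((α₁ + α₂) * t) := by
        have hexp : exp (α₁ * t - m) * exp (α₂ * t + C) = exp (C - m) * exp ((α₁ + α₂) * t) := by
          rw [← exp_add, ← exp_add]
          ring_nf
        linear_combination δ * hexp
    _ ≤ exp (C - m) * δ * exp (γ * t) := by gcongr

lemma sq_sqrt_exp_neg_sub_le {t p q : ℝ} (ht : 0 ≤ t) (hγ : α₁ + 2 * α₂ ≤ γ)
    (hp : m - α₁ * t ≤ p) (hq : m - α₁ * t ≤ q) (hpq : |p - q| ≤ exp (α₂ * t + C) * δ) :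
    (√(exp (-p)) - √(exp (-q))) ^ 2 ≤ exp (2 * C - m) * δ ^ 2 / 4 * exp (γ * t) := by
  have hhalf : |√(exp (-p)) - √(exp (-q))|
      ≤ exp ((α₁ * t - m) / 2) * (exp (α₂ * t + C) * δ / 2) := by
    rw [← exp_half, ← exp_half]
    calc |exp (-p / 2) - exp (-q / 2)| ≤ exp ((α₁ * t - m) / 2) * |-p / 2 - -q / 2| :=
          abs_exp_sub_exp_le_of_le (by linarith) (by linarith)
      _ ≤ exp ((α₁ * t - m) / 2) * (exp (α₂ * t + C) * δ / 2) := by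
          rw [show -p / 2 - -q / 2 = (q - p) / 2 by ring, abs_div, abs_two, abs_sub_comm]
          gcongr
  calc (√(exp (-p)) - √(exp (-q))) ^ 2
      ≤ (exp ((α₁ * t - m) / 2) * (exp (α₂ * t + C) * δ / 2)) ^ 2 :=
        sq_le_sq.2 (hhalf.trans (le_abs_self _))
    _ = exp (2 * C - m) * δ ^ 2 / 4 * exp ((α₁ + 2 * α₂) * t) := by
        have hexp : exp ((α₁ * t - m) / 2) ^ 2 * exp (α₂ * t + C) ^ 2
            = exp (2 * C - m) * exp ((α₁ + 2 * α₂) * t) := by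
          rw [← exp_nat_mul, ← exp_nat_mul, ← exp_add, ← exp_add]
          push_cast
          ring_nf
        linear_combination (δ ^ 2 / 4) * hexp
    _ ≤ exp (2 * C - m) * δ ^ 2 / 4 * exp (γ * t) := by gcongr

end Potential

section Gibbs

variable {X : Type*} [NormedAddCommGroup X] [MeasurableSpace X] {μ : Measure X}
  {φ ψ : X → ℝ} {m α₁ α₂ γ C δ : ℝ}

lemma integrable_exp_neg_of_affine_le (hφ : Measurable φ) (hγ : α₁ ≤ γ)
    (hw : Integrable (fun u => exp (γ * ‖u‖)) μ) (hφm : ∀ u, m - α₁ * ‖u‖ ≤ φ u) :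
    Integrable (fun u => exp (-φ u)) μ :=
  (hw.const_mul _).mono' hφ.neg.exp.aestronglyMeasurable <| ae_of_all μ fun u => by
    rw [norm_of_nonneg (exp_nonneg _)]
    exact exp_neg_le_of_affine_le (norm_nonneg u) hγ (hφm u)

lemma integral_exp_neg_le_of_affine_le (hφ : Measurable φ) (hγ : α₁ ≤ γ)
    (hw : Integrable (fun u => exp (γ * ‖u‖)) μ) (hφm : ∀ u, m - α₁ * ‖u‖ ≤ φ u) :
    ∫ u, exp (-φ u) ∂μ ≤ exp (-m) * ∫ u, exp (γ * ‖u‖) ∂μ := by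
  rw [← integral_const_mul]
  exact integral_mono (integrable_exp_neg_of_affine_le hφ hγ hw hφm) (hw.const_mul _)
    fun u => exp_neg_le_of_affine_le (norm_nonneg u) hγ (hφm u)

lemma abs_integral_exp_neg_sub_le (hφ : Measurable φ) (hψ : Measurable ψ) (hα₂ : 0 ≤ α₂)
    (hγ : α₁ + α₂ ≤ γ) (hw : Integrable (fun u => exp (γ * ‖u‖)) μ)
    (hφm : ∀ u, m - α₁ * ‖u‖ ≤ φ u) (hψm : ∀ u, m - α₁ * ‖u‖ ≤ ψ u)
    (hφψ : ∀ u, |φ u - ψ u| ≤ exp (α₂ * ‖u‖ + C) * δ) :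
    |∫ u, exp (-φ u) ∂μ - ∫ u, exp (-ψ u) ∂μ| ≤ exp (C - m) * δ * ∫ u, exp (γ * ‖u‖) ∂μ := by
  have hα₁ : α₁ ≤ γ := by linarith
  rw [← integral_sub (integrable_exp_neg_of_affine_le hφ hα₁ hw hφm)
    (integrable_exp_neg_of_affine_le hψ hα₁ hw hψm), ← integral_const_mul]
  refine (abs_integral_le_integral_abs).trans <|
    integral_mono_of_nonneg (ae_of_all μ fun u => abs_nonneg _) (hw.const_mul _) <|
      ae_of_all μ fun u => ?_
  exact abs_exp_neg_sub_exp_neg_le (norm_nonneg u) hγ (hφm u) (hψm u) (hφψ u)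

lemma integral_sq_sqrt_exp_neg_sub_le (hγ : α₁ + 2 * α₂ ≤ γ)
    (hw : Integrable (fun u => exp (γ * ‖u‖)) μ)
    (hφm : ∀ u, m - α₁ * ‖u‖ ≤ φ u) (hψm : ∀ u, m - α₁ * ‖u‖ ≤ ψ u)
    (hφψ : ∀ u, |φ u - ψ u| ≤ exp (α₂ * ‖u‖ + C) * δ) :
    ∫ u, (√(exp (-φ u)) - √(exp (-ψ u))) ^ 2 ∂μ
      ≤ exp (2 * C - m) * δ ^ 2 / 4 * ∫ u, exp (γ * ‖u‖) ∂μ := by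
  rw [← integral_const_mul]
  exact integral_mono_of_nonneg (ae_of_all μ fun u => sq_nonneg _) (hw.const_mul _) <|
    ae_of_all μ fun u => sq_sqrt_exp_neg_sub_le (norm_nonneg u) hγ (hφm u) (hψm u) (hφψ u)

lemma hellinger_gibbs_le {z : ℝ} (hφ : Measurable φ) (hψ : Measurable ψ)
    (hα₂ : 0 ≤ α₂) (hγ : α₁ + 2 * α₂ ≤ γ) (hw : Integrable (fun u => exp (γ * ‖u‖)) μ)
    (hφm : ∀ u, m - α₁ * ‖u‖ ≤ φ u) (hψm : ∀ u, m - α₁ * ‖u‖ ≤ ψ u)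
    (hφψ : ∀ u, |φ u - ψ u| ≤ exp (α₂ * ‖u‖ + C) * δ) (hz : 0 < z)
    (hzφ : z ≤ ∫ u, exp (-φ u) ∂μ) (hzψ : z ≤ ∫ u, exp (-ψ u) ∂μ) :
    √((1 / 2) * ∫ u, (√(exp (-φ u) / ∫ v, exp (-φ v) ∂μ)
        - √(exp (-ψ u) / ∫ v, exp (-ψ v) ∂μ)) ^ 2 ∂μ)
      ≤ √(exp (2 * C - m) * (∫ u, exp (γ * ‖u‖) ∂μ) / (4 * z)
          + exp (-m) * (∫ u, exp (γ * ‖u‖) ∂μ) * (exp (C - m) * ∫ u, exp (γ * ‖u‖) ∂μ) ^ 2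
            / (4 * z ^ 3)) * δ := by
  set I := ∫ u, exp (γ * ‖u‖) ∂μ
  have hδ : 0 ≤ δ := nonneg_of_mul_nonneg_right ((abs_nonneg _).trans (hφψ 0)) (exp_pos _)
  have hα₁ : α₁ ≤ γ := by linarith
  have hsplit := integral_sq_sqrt_normalized_sub_le (μ := μ) (fun u => (exp_pos (-φ u)).le)
    (fun u => (exp_pos (-ψ u)).le) (integrable_exp_neg_of_affine_le hφ hα₁ hw hφm)
    (integrable_exp_neg_of_affine_le hψ hα₁ hw hψm) hz hzφ hzψ
  have hsqrt := integral_sq_sqrt_exp_neg_sub_le (μ := μ) hγ hw hφm hψm hφψ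
  have hZψ := integral_exp_neg_le_of_affine_le (μ := μ) hψ hα₁ hw hψm
  have hZdiff : ((∫ u, exp (-φ u) ∂μ) - ∫ u, exp (-ψ u) ∂μ) ^ 2 ≤ (exp (C - m) * δ * I) ^ 2 :=
    sq_le_sq.2 <| (abs_integral_exp_neg_sub_le hφ hψ hα₂ (by linarith) hw hφm hψm hφψ).trans
      (le_abs_self _)
  rw [← sqrt_sq hδ, ← sqrt_mul' _ (sq_nonneg δ)]
  refine sqrt_le_sqrt ?_
  calc (1 / 2) * ∫ u, (√(exp (-φ u) / ∫ v, exp (-φ v) ∂μ)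
        - √(exp (-ψ u) / ∫ v, exp (-ψ v) ∂μ)) ^ 2 ∂μ
      ≤ (1 / 2) * (2 / z * (exp (2 * C - m) * δ ^ 2 / 4 * I)
          + exp (-m) * I * (exp (C - m) * δ * I) ^ 2 / (2 * z ^ 3)) := by
        refine mul_le_mul_of_nonneg_left (hsplit.trans ?_) (by norm_num)
        gcongr
    _ = _ := by ring

end Gibbs

theorem posterior_wellposed_hellinger_general
    {X Y : Type*} [NormedAddCommGroup X] [NormedAddCommGroup Y] [MeasurableSpace X]
    (μ0 : Measure X) [IsProbabilityMeasure μ0]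
    (Φ : X → Y → ℝ) (hΦmeas : ∀ y, Measurable fun u => Φ u y)
    (α₁ α₂ : ℝ) (hα₁ : 0 ≤ α₁) (hα₂ : 0 ≤ α₂)
    -- Assumption (i)
    (M : ℝ → ℝ) (h1 : ∀ r : ℝ, ∀ u y, ‖y‖ < r → M r - α₁ * ‖u‖ ≤ Φ u y)
    -- Assumption (iv)
    (C : ℝ) (h4 : ∀ u y₁ y₂, |Φ u y₁ - Φ u y₂| ≤ Real.exp (α₂ * ‖u‖ + C) * ‖y₁ - y₂‖)
    -- Besov prior: Fernique-like exponential integrability with constants c_e, r*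
    (ce rstar κ : ℝ) (hce : 0 < ce) (hrstar : 0 < rstar)
    (hκ : 2 * ce * rstar * (α₁ + 2 * α₂) < κ)
    (hFer : ∀ α : ℝ, 0 < α → α < κ / (2 * ce * rstar) →
      Integrable (fun u => Real.exp (α * ‖u‖)) μ0) :
    ∀ r : ℝ, 0 < r → ∃ Cr : ℝ, ∀ y y' : Y, ‖y‖ ≤ r → ‖y'‖ ≤ r →
      Real.sqrt ((1 / 2) * ∫ u,
        (Real.sqrt (Real.exp (-Φ u y) / ∫ v, Real.exp (-Φ v y) ∂μ0)
          - Real.sqrt (Real.exp (-Φ u y') / ∫ v, Real.exp (-Φ v y') ∂μ0)) ^ 2 ∂μ0)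
      ≤ Cr * ‖y - y'‖ := by
  intro r hr
  obtain ⟨γ, hγ, hγ0, hw⟩ : ∃ γ, α₁ + 2 * α₂ < γ ∧ 0 < γ ∧
      Integrable (fun u => exp (γ * ‖u‖)) μ0 := by
    obtain ⟨γ, hβγ, hγκ⟩ := exists_between ((lt_div_iff₀' (by positivity)).2 hκ)
    exact ⟨γ, hβγ, by linarith, hFer γ (by linarith) hγκ⟩
  -- `X` carries no Borel structure: measurability of the norm comes from the exponential moment.
  have hnorm : AEMeasurable (fun u : X => ‖u‖) μ0 := aemeasurable_of_integrable_exp_mul hγ0.ne' hw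
  have hlow : ∀ y : Y, ‖y‖ ≤ r → ∀ u, M (r + 1) - α₁ * ‖u‖ ≤ Φ u y :=
    fun y hy u => h1 (r + 1) u y (by linarith)
  have hint : ∀ y : Y, ‖y‖ ≤ r → Integrable (fun u => exp (-Φ u y)) μ0 :=
    fun y hy => integrable_exp_neg_of_affine_le (hΦmeas y) (by linarith) hw (hlow y hy)
  -- On the ball, (iv) gives `Φ u y ≤ Φ u 0 + exp (α₂ * ‖u‖ + C) * r`.
  obtain ⟨z, hz, hzle⟩ := exists_pos_le_integral_exp_neg (hint 0 (by simp [hr.le]))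
    (hΦmeas 0).aemeasurable (((hnorm.const_mul α₂).add_const C).exp.mul_const r)
    (fun u => mul_nonneg (exp_pos _).le hr.le)
  have hzZ : ∀ y : Y, ‖y‖ ≤ r → z ≤ ∫ u, exp (-Φ u y) ∂μ0 := fun y hy =>
    hzle _ (hint y hy) fun u => by
      have hlip := (abs_le.1 (h4 u y 0)).2
      rw [sub_zero] at hlip
      nlinarith [exp_pos (α₂ * ‖u‖ + C)]
  exact ⟨_, fun y y' hy hy' => hellinger_gibbs_le (hΦmeas y) (hΦmeas y') hα₂ hγ.le hw
    (hlow y hy) (hlow y' hy') (fun u => h4 u y y') hz (hzZ y hy) (hzZ y' hy')⟩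

/-- Theorem 3.3, well-posedness: under Assumptions (i)–(iv) on Φ and
with μ₀ a (κ, X^{s,q}) Besov prior whose C^t support embeds in X with constant c_e
(so that, by the Fernique-like theorem with constant r*, exp(α‖u‖_X) is μ₀-integrable
for all α < κ/(2 c_e r*)), and κ > 2 c_e r*(α₁ + 2α₂), the posteriors
dμ^y/dμ₀ ∝ exp(−Φ(·;y)) satisfy the Hellinger Lipschitz bound
d_Hell(μ^y, μ^{y'}) ≤ C(r)‖y − y'‖ for ‖y‖, ‖y'‖ ≤ r.  The Hellinger distance is
written out with reference measure μ₀. -/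
theorem posterior_wellposed_hellinger
    {X Y : Type*} [NormedAddCommGroup X] [NormedAddCommGroup Y] [MeasurableSpace X]
    (μ0 : Measure X) [IsProbabilityMeasure μ0]
    (Φ : X → Y → ℝ) (hΦmeas : ∀ y, Measurable fun u => Φ u y)
    (α₁ α₂ : ℝ) (hα₁ : 0 ≤ α₁) (hα₂ : 0 ≤ α₂)
    -- Assumption (i)
    (M : ℝ → ℝ) (h1 : ∀ r : ℝ, ∀ u y, ‖y‖ < r → M r - α₁ * ‖u‖ ≤ Φ u y)
    -- Assumption (ii)
    (K : ℝ → ℝ) (h2 : ∀ r : ℝ, ∀ u y, ‖u‖ < r → ‖y‖ < r → Φ u y ≤ K r)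
    -- Assumption (iii)
    (L : ℝ → ℝ) (h3 : ∀ r : ℝ, ∀ u₁ u₂ y, ‖u₁‖ < r → ‖u₂‖ < r → ‖y‖ < r →
      |Φ u₁ y - Φ u₂ y| ≤ L r * ‖u₁ - u₂‖)
    -- Assumption (iv)
    (C : ℝ) (h4 : ∀ u y₁ y₂, |Φ u y₁ - Φ u y₂| ≤ Real.exp (α₂ * ‖u‖ + C) * ‖y₁ - y₂‖)
    -- Besov prior: Fernique-like exponential integrability with constants c_e, r*
    (ce rstar κ : ℝ) (hce : 0 < ce) (hrstar : 0 < rstar)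
    (hκ : 2 * ce * rstar * (α₁ + 2 * α₂) < κ)
    (hFer : ∀ α : ℝ, 0 < α → α < κ / (2 * ce * rstar) →
      Integrable (fun u => Real.exp (α * ‖u‖)) μ0) :
    ∀ r : ℝ, 0 < r → ∃ Cr : ℝ, ∀ y y' : Y, ‖y‖ ≤ r → ‖y'‖ ≤ r →
      Real.sqrt ((1 / 2) * ∫ u,
        (Real.sqrt (Real.exp (-Φ u y) / ∫ v, Real.exp (-Φ v y) ∂μ0)
          - Real.sqrt (Real.exp (-Φ u y') / ∫ v, Real.exp (-Φ v y') ∂μ0)) ^ 2 ∂μ0)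
      ≤ Cr * ‖y - y'‖ :=
  posterior_wellposed_hellinger_general μ0 Φ hΦmeas α₁ α₂ hα₁ hα₂ M h1 C h4 ce rstar κ hce hrstar hκ
    hFer
end

section
/- Let μ and μ^N have densities exp(−Φ)/Z and exp(−Φ^N)/Z^N with respect to μ₀, where Φ, Φ^N satisfy the lower bound Φ(u) ≥ M − α₁‖u‖_X uniformly in N, local boundedness, and |Φ(u) − Φ^N(u)| ≤ exp(α₃‖u‖_X + C)ψ(N) with ψ(N) → 0. If μ₀ is a (κ, X^{s,q}) Besov measure with s > t + d/q, C^t ↪ X with constant c_e, and κ > 2 c_e r*(α₁ + 2α₃), then d_Hell(μ, μ^N) ≤ C ψ(N) with C independent of N. -/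
/-!
Write `f = exp (-Φ)`, `g = exp (-Φᴺ)` and `Z, Zᴺ` for their `μ₀`-integrals. Splitting
`√(f / Z) - √(g / Zᴺ) = (√f - √g) / √Z + √g (Z^{-1/2} - (Zᴺ)^{-1/2})` bounds the squared
Hellinger distance by `∫ (√f - √g)² / Z + Zᴺ (Z^{-1/2} - (Zᴺ)^{-1/2})²`. The mean value theorem
for `exp` and the lower bound on the potentials give `|√f - √g|² ≲ e^{(α₁ + 2α₃)‖u‖} ψ(N)²` and
`|Z - Zᴺ| ≤ ∫ |f - g| ≲ ψ(N) ∫ e^{(α₁ + α₃)‖u‖}`, and the Fernique-type bound makes these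
weights integrable. When `ψ(N)` is so large that `Zᴺ` might be small, the trivial bound
`d_Hell ≤ √2` is already of order `ψ(N)`.
-/

open MeasureTheory Real Filter

theorem abs_exp_sub_exp_le_exp_max_mul (x y : ℝ) :
    |exp x - exp y| ≤ exp (max x y) * |x - y| := by
  wlog hxy : y ≤ x generalizing x y
  · simpa only [abs_sub_comm, max_comm] using this y x (le_of_not_ge hxy)
  have hdiff : exp x - exp y ≤ exp x * (x - y) := by
    have h := add_one_le_exp (y - x)
    rw [exp_sub] at h
    have hx := exp_pos x
    rw [le_div_iff₀ hx] at h
    nlinarith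
  rw [max_eq_left hxy, abs_of_nonneg (sub_nonneg.2 (exp_le_exp.2 hxy)),
    abs_of_nonneg (sub_nonneg.2 hxy)]
  exact hdiff

theorem abs_exp_neg_sub_exp_neg_le_s12 {x y m e : ℝ} (hx : m ≤ x) (hy : m ≤ y)
    (hxy : |x - y| ≤ e) : |exp (-x) - exp (-y)| ≤ exp (-m) * e := by
  calc |exp (-x) - exp (-y)| ≤ exp (max (-x) (-y)) * |-x - -y| :=
        abs_exp_sub_exp_le_exp_max_mul _ _
    _ ≤ exp (-m) * e := by
        rw [neg_sub_neg, abs_sub_comm]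
        gcongr
        exact max_le (neg_le_neg hx) (neg_le_neg hy)

theorem sq_sqrt_exp_neg_sub_sqrt_exp_neg_le {x y m e : ℝ} (hx : m ≤ x) (hy : m ≤ y)
    (hxy : |x - y| ≤ e) : (√(exp (-x)) - √(exp (-y))) ^ 2 ≤ exp (-m) * e ^ 2 / 4 := by
  have hhalf : |exp (-(x / 2)) - exp (-(y / 2))| ≤ exp (-(m / 2)) * (e / 2) :=
    abs_exp_neg_sub_exp_neg_le_s12 (by linarith) (by linarith)
      (by rw [← sub_div, abs_div, abs_two]; linarith)
  rw [← exp_half, ← exp_half, neg_div, neg_div, ← sq_abs]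
  calc |exp (-(x / 2)) - exp (-(y / 2))| ^ 2 ≤ (exp (-(m / 2)) * (e / 2)) ^ 2 := by
        gcongr
    _ = exp (-m) * e ^ 2 / 4 := by
        rw [mul_pow, ← exp_nat_mul]; ring_nf

theorem exp_mul_add_le_exp_mul_exp {β γ r c : ℝ} (hβ : β ≤ γ) (hr : 0 ≤ r) :
    exp (β * r + c) ≤ exp c * exp (γ * r) := by
  rw [← exp_add, add_comm c]
  gcongr

theorem sq_inv_sqrt_sub_inv_sqrt_le_s12 {a b δ : ℝ} (hδ : 0 < δ) (ha : δ ≤ a) (hb : δ ≤ b) :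
    ((√a)⁻¹ - (√b)⁻¹) ^ 2 ≤ (a - b) ^ 2 / (4 * δ ^ 3) := by
  have hsδ : 0 < √δ := sqrt_pos.2 hδ
  have hsa : √δ ≤ √a := sqrt_le_sqrt ha
  have hsb : √δ ≤ √b := sqrt_le_sqrt hb
  have hden : 2 * δ * √δ ≤ √a * √b * (√a + √b) := by
    have h := mul_le_mul (mul_le_mul hsa hsb hsδ.le (hsδ.trans_le hsa).le)
      (add_le_add hsa hsb) (by positivity) (by positivity)
    rwa [mul_self_sqrt hδ.le, ← two_mul, mul_left_comm, ← mul_assoc] at h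
  have hkey : (√a)⁻¹ - (√b)⁻¹ = (b - a) / (√a * √b * (√a + √b)) := by
    rw [show b - a = √b ^ 2 - √a ^ 2 by
      rw [sq_sqrt (hδ.le.trans ha), sq_sqrt (hδ.le.trans hb)]]
    have : 0 < √a := hsδ.trans_le hsa
    have : 0 < √b := hsδ.trans_le hsb
    field_simp
    ring
  have h4 : 4 * δ ^ 3 = (2 * δ * √δ) ^ 2 := by
    rw [mul_pow, sq_sqrt hδ.le]; ring
  rw [hkey, div_pow, h4, ← sq_abs, ← sq_abs (a - b), abs_sub_comm]
  gcongr

section Hellinger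

variable {α : Type*} [MeasurableSpace α] {μ : Measure α} {f g : α → ℝ}

noncomputable def hellingerDist (μ : Measure α) (f g : α → ℝ) : ℝ :=
  √((1 / 2) * ∫ u, (√(f u / ∫ v, f v ∂μ) - √(g u / ∫ v, g v ∂μ)) ^ 2 ∂μ)

theorem sq_hellingerDist (μ : Measure α) (f g : α → ℝ) :
    hellingerDist μ f g ^ 2
      = (1 / 2) * ∫ u, (√(f u / ∫ v, f v ∂μ) - √(g u / ∫ v, g v ∂μ)) ^ 2 ∂μ :=
  sq_sqrt (mul_nonneg (by norm_num) (integral_nonneg fun _ => sq_nonneg _))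

theorem integrable_sq_sqrt_sub_sqrt (hf : Integrable f μ) (hg : Integrable g μ)
    (hf0 : ∀ u, 0 ≤ f u) (hg0 : ∀ u, 0 ≤ g u) :
    Integrable (fun u => (√(f u) - √(g u)) ^ 2) μ := by
  refine ((hf.add hg).const_mul 2).mono' ?_ (ae_of_all _ fun u => ?_)
  · exact ((continuous_sqrt.comp_aestronglyMeasurable hf.1).sub
      (continuous_sqrt.comp_aestronglyMeasurable hg.1)).pow 2
  · rw [norm_of_nonneg (sq_nonneg _), sub_eq_add_neg]
    refine add_sq_le.trans_eq ?_
    rw [neg_sq, sq_sqrt (hf0 u), sq_sqrt (hg0 u), Pi.add_apply]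

theorem sq_hellingerDist_le_two (hf : Integrable f μ) (hg : Integrable g μ)
    (hf0 : ∀ u, 0 ≤ f u) (hg0 : ∀ u, 0 ≤ g u) : hellingerDist μ f g ^ 2 ≤ 2 := by
  have hnorm : ∀ {h : α → ℝ}, (∫ u, h u / ∫ v, h v ∂μ ∂μ) ≤ 1 := fun {h} => by
    rw [integral_div]; exact div_self_le_one _
  have hpt : ∀ u, (√(f u / ∫ v, f v ∂μ) - √(g u / ∫ v, g v ∂μ)) ^ 2
      ≤ 2 * (f u / ∫ v, f v ∂μ + g u / ∫ v, g v ∂μ) := fun u => by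
    rw [sub_eq_add_neg]
    refine add_sq_le.trans_eq ?_
    rw [neg_sq, sq_sqrt (div_nonneg (hf0 u) (integral_nonneg hf0)),
      sq_sqrt (div_nonneg (hg0 u) (integral_nonneg hg0))]
  have hint : Integrable (fun u => 2 * (f u / ∫ v, f v ∂μ + g u / ∫ v, g v ∂μ)) μ :=
    ((hf.div_const _).add (hg.div_const _)).const_mul 2
  rw [sq_hellingerDist]
  calc (1 / 2) * ∫ u, (√(f u / ∫ v, f v ∂μ) - √(g u / ∫ v, g v ∂μ)) ^ 2 ∂μ
      ≤ (1 / 2) * ∫ u, 2 * (f u / ∫ v, f v ∂μ + g u / ∫ v, g v ∂μ) ∂μ := by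
        refine mul_le_mul_of_nonneg_left ?_ (by norm_num)
        exact integral_mono_of_nonneg (ae_of_all _ fun _ => sq_nonneg _) hint (ae_of_all _ hpt)
    _ ≤ 2 := by
        rw [integral_const_mul, integral_add (hf.div_const _) (hg.div_const _)]
        linarith [@hnorm f, @hnorm g]

theorem sq_hellingerDist_le (hf : Integrable f μ) (hg : Integrable g μ)
    (hf0 : ∀ u, 0 ≤ f u) (hg0 : ∀ u, 0 ≤ g u) {δ : ℝ} (hδ : 0 < δ)
    (hδf : δ ≤ ∫ u, f u ∂μ) (hδg : δ ≤ ∫ u, g u ∂μ) :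
    hellingerDist μ f g ^ 2 ≤ (∫ u, (√(f u) - √(g u)) ^ 2 ∂μ) / δ
      + (∫ u, g u ∂μ) * (∫ u, f u ∂μ - ∫ u, g u ∂μ) ^ 2 / (4 * δ ^ 3) := by
  set Zf := ∫ u, f u ∂μ
  set Zg := ∫ u, g u ∂μ
  set q := ((√Zf)⁻¹ - (√Zg)⁻¹) ^ 2
  have hZf : 0 < Zf := hδ.trans_le hδf
  have hpt : ∀ u, (√(f u / Zf) - √(g u / Zg)) ^ 2
      ≤ 2 * ((√(f u) - √(g u)) ^ 2 / Zf + g u * q) := fun u => by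
    have hsplit : √(f u / Zf) - √(g u / Zg)
        = (√(f u) - √(g u)) / √Zf + √(g u) * ((√Zf)⁻¹ - (√Zg)⁻¹) := by
      rw [sqrt_div (hf0 u), sqrt_div (hg0 u)]; ring
    rw [hsplit]
    refine add_sq_le.trans_eq ?_
    rw [div_pow, mul_pow, sq_sqrt hZf.le, sq_sqrt (hg0 u)]
  have hint : Integrable (fun u => 2 * ((√(f u) - √(g u)) ^ 2 / Zf + g u * q)) μ :=
    (((integrable_sq_sqrt_sub_sqrt hf hg hf0 hg0).div_const Zf).add (hg.mul_const q)).const_mul 2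
  have hsq := integral_mono_of_nonneg (ae_of_all _ fun _ => sq_nonneg _) hint (ae_of_all _ hpt)
  rw [integral_const_mul, integral_add ((integrable_sq_sqrt_sub_sqrt hf hg hf0 hg0).div_const Zf)
    (hg.mul_const q), integral_div, integral_mul_const] at hsq
  have hI : 0 ≤ ∫ u, (√(f u) - √(g u)) ^ 2 ∂μ := integral_nonneg fun _ => sq_nonneg _
  have h1 : (∫ u, (√(f u) - √(g u)) ^ 2 ∂μ) / Zf ≤ (∫ u, (√(f u) - √(g u)) ^ 2 ∂μ) / δ :=
    div_le_div_of_nonneg_left hI hδ hδf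
  have h2 : Zg * q ≤ Zg * ((Zf - Zg) ^ 2 / (4 * δ ^ 3)) :=
    mul_le_mul_of_nonneg_left (sq_inv_sqrt_sub_inv_sqrt_le_s12 hδ hδf hδg) (hδ.le.trans hδg)
  rw [sq_hellingerDist, mul_div_assoc]
  linarith


theorem hellingerDist_le_of_perturbation (hf : Integrable f μ) (hg : Integrable g μ)
    (hf0 : ∀ u, 0 ≤ f u) (hg0 : ∀ u, 0 ≤ g u) (hZ : 0 < ∫ u, f u ∂μ) {a b ε : ℝ} (hε : 0 ≤ ε)
    (hZg : |∫ u, f u ∂μ - ∫ u, g u ∂μ| ≤ a * ε)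
    (hsq : ∫ u, (√(f u) - √(g u)) ^ 2 ∂μ ≤ b * ε ^ 2) :
    hellingerDist μ f g
      ≤ √(2 * b / (∫ u, f u ∂μ) + 8 * a ^ 2 / (∫ u, f u ∂μ) ^ 2) * ε := by
  set Z := ∫ u, f u ∂μ
  set Zg := ∫ u, g u ∂μ
  have hbε : 0 ≤ 2 * b / Z * ε ^ 2 := by
    have := (integral_nonneg fun u => sq_nonneg (√(f u) - √(g u))).trans hsq
    rw [div_mul_eq_mul_div, mul_assoc]
    positivity
  suffices h : hellingerDist μ f g ^ 2 ≤ (2 * b / Z + 8 * a ^ 2 / Z ^ 2) * ε ^ 2 by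
    calc hellingerDist μ f g = √(hellingerDist μ f g ^ 2) := (sqrt_sq (sqrt_nonneg _)).symm
      _ ≤ √((2 * b / Z + 8 * a ^ 2 / Z ^ 2) * ε ^ 2) := sqrt_le_sqrt h
      _ = _ := by rw [sqrt_mul' _ (sq_nonneg ε), sqrt_sq hε]
  rcases le_or_gt (a * ε) (Z / 2) with hsmall | hlarge
  · obtain ⟨hZg_lo, hZg_hi⟩ := abs_le.1 hZg
    have hδg : Z / 2 ≤ Zg := by linarith
    have hdiff : (Z - Zg) ^ 2 ≤ (a * ε) ^ 2 := by
      rw [← sq_abs]; exact pow_le_pow_left₀ (abs_nonneg _) hZg 2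
    have h1 : (∫ u, (√(f u) - √(g u)) ^ 2 ∂μ) / (Z / 2) ≤ 2 * b / Z * ε ^ 2 := by
      rw [div_mul_eq_mul_div, le_div_iff₀ hZ, div_mul_eq_mul_div, div_le_iff₀ (by positivity)]
      nlinarith
    have h2 : Zg * (Z - Zg) ^ 2 / (4 * (Z / 2) ^ 3) ≤ 3 * a ^ 2 / Z ^ 2 * ε ^ 2 := by
      calc Zg * (Z - Zg) ^ 2 / (4 * (Z / 2) ^ 3)
          ≤ (3 * Z / 2) * (a * ε) ^ 2 / (4 * (Z / 2) ^ 3) := by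
            gcongr
            linarith
        _ = 3 * a ^ 2 / Z ^ 2 * ε ^ 2 := by field_simp; ring
    have h3 : 0 ≤ a ^ 2 / Z ^ 2 * ε ^ 2 := by positivity
    have hH : hellingerDist μ f g ^ 2 ≤ (∫ u, (√(f u) - √(g u)) ^ 2 ∂μ) / (Z / 2)
        + Zg * (Z - Zg) ^ 2 / (4 * (Z / 2) ^ 3) :=
      sq_hellingerDist_le hf hg hf0 hg0 (half_pos hZ) (half_le_self hZ.le) hδg
    have hsplit : (2 * b / Z + 8 * a ^ 2 / Z ^ 2) * ε ^ 2
        = 2 * b / Z * ε ^ 2 + 3 * a ^ 2 / Z ^ 2 * ε ^ 2 + 5 * (a ^ 2 / Z ^ 2 * ε ^ 2) := by ring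
    linarith
  · have hratio : 1 < 2 * a * ε / Z := by rw [lt_div_iff₀ hZ]; linarith
    have h8 : 8 * a ^ 2 / Z ^ 2 * ε ^ 2 = 2 * (2 * a * ε / Z) ^ 2 := by field_simp; ring
    have hH := sq_hellingerDist_le_two hf hg hf0 hg0
    nlinarith

end Hellinger

section Potential

variable {X : Type*} [NormedAddCommGroup X] [MeasurableSpace X] {μ : Measure X}
  {Φ Ψ : X → ℝ} {M α₁ α₃ C γ ε : ℝ}

theorem integrable_exp_neg_of_le (hW : Integrable (fun u => exp (γ * ‖u‖)) μ) (hγ : α₁ ≤ γ)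
    (hΦ : Measurable Φ) (hlow : ∀ u, M - α₁ * ‖u‖ ≤ Φ u) :
    Integrable (fun u => exp (-Φ u)) μ := by
  refine (hW.const_mul (exp (-M))).mono' (measurable_exp.comp hΦ.neg).aestronglyMeasurable
    (ae_of_all _ fun u => ?_)
  rw [norm_of_nonneg (exp_pos _).le]
  calc exp (-Φ u) ≤ exp (α₁ * ‖u‖ + -M) := exp_le_exp.2 (by linarith [hlow u])
    _ ≤ exp (-M) * exp (γ * ‖u‖) := exp_mul_add_le_exp_mul_exp hγ (norm_nonneg u)

theorem abs_integral_exp_neg_sub_le_s12 (hW : Integrable (fun u => exp (γ * ‖u‖)) μ)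
    (hγ : α₁ + α₃ ≤ γ) (hΦ : Integrable (fun u => exp (-Φ u)) μ)
    (hΨ : Integrable (fun u => exp (-Ψ u)) μ) (hlowΦ : ∀ u, M - α₁ * ‖u‖ ≤ Φ u)
    (hlowΨ : ∀ u, M - α₁ * ‖u‖ ≤ Ψ u) (hε : 0 ≤ ε)
    (happ : ∀ u, |Φ u - Ψ u| ≤ exp (α₃ * ‖u‖ + C) * ε) :
    |∫ u, exp (-Φ u) ∂μ - ∫ u, exp (-Ψ u) ∂μ|
      ≤ exp (C - M) * (∫ u, exp (γ * ‖u‖) ∂μ) * ε := by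
  have hpt : ∀ u, |exp (-Φ u) - exp (-Ψ u)| ≤ exp (C - M) * ε * exp (γ * ‖u‖) := fun u =>
    calc |exp (-Φ u) - exp (-Ψ u)| ≤ exp (-(M - α₁ * ‖u‖)) * (exp (α₃ * ‖u‖ + C) * ε) :=
          abs_exp_neg_sub_exp_neg_le_s12 (hlowΦ u) (hlowΨ u) (happ u)
      _ = exp ((α₁ + α₃) * ‖u‖ + (C - M)) * ε := by rw [← mul_assoc, ← exp_add]; ring_nf
      _ ≤ exp (C - M) * exp (γ * ‖u‖) * ε := by
          gcongr; exact exp_mul_add_le_exp_mul_exp hγ (norm_nonneg u)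
      _ = exp (C - M) * ε * exp (γ * ‖u‖) := by ring
  rw [← integral_sub hΦ hΨ]
  calc |∫ u, exp (-Φ u) - exp (-Ψ u) ∂μ| ≤ ∫ u, |exp (-Φ u) - exp (-Ψ u)| ∂μ :=
        abs_integral_le_integral_abs
    _ ≤ ∫ u, exp (C - M) * ε * exp (γ * ‖u‖) ∂μ :=
        integral_mono (hΦ.sub hΨ).abs (hW.const_mul _) hpt
    _ = exp (C - M) * (∫ u, exp (γ * ‖u‖) ∂μ) * ε := by rw [integral_const_mul]; ring

theorem integral_sq_sqrt_exp_neg_sub_le_s12 (hW : Integrable (fun u => exp (γ * ‖u‖)) μ)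
    (hγ : α₁ + 2 * α₃ ≤ γ) (hlowΦ : ∀ u, M - α₁ * ‖u‖ ≤ Φ u)
    (hlowΨ : ∀ u, M - α₁ * ‖u‖ ≤ Ψ u) (happ : ∀ u, |Φ u - Ψ u| ≤ exp (α₃ * ‖u‖ + C) * ε) :
    ∫ u, (√(exp (-Φ u)) - √(exp (-Ψ u))) ^ 2 ∂μ
      ≤ exp (2 * C - M) / 4 * (∫ u, exp (γ * ‖u‖) ∂μ) * ε ^ 2 := by
  have hpt : ∀ u, (√(exp (-Φ u)) - √(exp (-Ψ u))) ^ 2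
      ≤ exp (2 * C - M) / 4 * ε ^ 2 * exp (γ * ‖u‖) := fun u =>
    calc (√(exp (-Φ u)) - √(exp (-Ψ u))) ^ 2
        ≤ exp (-(M - α₁ * ‖u‖)) * (exp (α₃ * ‖u‖ + C) * ε) ^ 2 / 4 :=
          sq_sqrt_exp_neg_sub_sqrt_exp_neg_le (hlowΦ u) (hlowΨ u) (happ u)
      _ = exp ((α₁ + 2 * α₃) * ‖u‖ + (2 * C - M)) * ε ^ 2 / 4 := by
          rw [mul_pow, ← exp_nat_mul, ← mul_assoc, ← exp_add]; ring_nf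
      _ ≤ exp (2 * C - M) * exp (γ * ‖u‖) * ε ^ 2 / 4 := by
          gcongr; exact exp_mul_add_le_exp_mul_exp hγ (norm_nonneg u)
      _ = exp (2 * C - M) / 4 * ε ^ 2 * exp (γ * ‖u‖) := by ring
  calc ∫ u, (√(exp (-Φ u)) - √(exp (-Ψ u))) ^ 2 ∂μ
      ≤ ∫ u, exp (2 * C - M) / 4 * ε ^ 2 * exp (γ * ‖u‖) ∂μ :=
        integral_mono_of_nonneg (ae_of_all _ fun _ => sq_nonneg _) (hW.const_mul _)
          (ae_of_all _ hpt)
    _ = exp (2 * C - M) / 4 * (∫ u, exp (γ * ‖u‖) ∂μ) * ε ^ 2 := by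
        rw [integral_const_mul]; ring

end Potential

theorem posterior_approximation_hellinger_general
    {X : Type*} [NormedAddCommGroup X] [MeasurableSpace X]
    (μ0 : Measure X) [IsProbabilityMeasure μ0]
    (Φ : X → ℝ) (hΦmeas : Measurable Φ)
    (ΦN : ℕ → X → ℝ) (hΦNmeas : ∀ N, Measurable (ΦN N))
    (α₁ α₃ : ℝ) (hα₁ : 0 ≤ α₁) (hα₃ : 0 ≤ α₃)
    -- uniform lower bound (Assumption (i), uniformly in N)
    (M : ℝ) (hlow : ∀ u, M - α₁ * ‖u‖ ≤ Φ u) (hlowN : ∀ N u, M - α₁ * ‖u‖ ≤ ΦN N u)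
    -- approximation of the potential
    (C : ℝ) (ψ : ℕ → ℝ)
    (happ : ∀ N u, |Φ u - ΦN N u| ≤ Real.exp (α₃ * ‖u‖ + C) * ψ N)
    -- Besov prior: Fernique-like exponential integrability with constants c_e, r*
    (ce rstar κ : ℝ) (hce : 0 < ce) (hrstar : 0 < rstar)
    (hκ : 2 * ce * rstar * (α₁ + 2 * α₃) < κ)
    (hFer : ∀ α : ℝ, 0 < α → α < κ / (2 * ce * rstar) →
      Integrable (fun u => Real.exp (α * ‖u‖)) μ0) :
    ∃ Ch : ℝ, ∀ N : ℕ,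
      Real.sqrt ((1 / 2) * ∫ u,
        (Real.sqrt (Real.exp (-Φ u) / ∫ v, Real.exp (-Φ v) ∂μ0)
          - Real.sqrt (Real.exp (-ΦN N u) / ∫ v, Real.exp (-ΦN N v) ∂μ0)) ^ 2 ∂μ0)
      ≤ Ch * ψ N := by
  have hψ0 : ∀ N, 0 ≤ ψ N := fun N =>
    nonneg_of_mul_nonneg_right ((abs_nonneg _).trans (happ N 0)) (exp_pos _)
  have hκ' : α₁ + 2 * α₃ < κ / (2 * ce * rstar) := by
    rw [lt_div_iff₀ (by positivity)]; linarith
  obtain ⟨γ, hγ, hγκ⟩ := exists_between hκ'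
  have hW : Integrable (fun u => exp (γ * ‖u‖)) μ0 := hFer γ (by linarith) hγκ
  have hf := integrable_exp_neg_of_le hW (by linarith) hΦmeas hlow
  have hg := fun N => integrable_exp_neg_of_le hW (by linarith) (hΦNmeas N) (hlowN N)
  exact ⟨_, fun N => hellingerDist_le_of_perturbation hf (hg N) (fun _ => (exp_pos _).le)
    (fun _ => (exp_pos _).le) (integral_exp_pos hf) (hψ0 N)
    (abs_integral_exp_neg_sub_le_s12 hW (by linarith) hf (hg N) hlow (hlowN N) (hψ0 N) (happ N))
    (integral_sq_sqrt_exp_neg_sub_le_s12 hW (by linarith) hlow (hlowN N) (happ N))⟩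

/-- Theorem 3.4: Hellinger approximation of the posterior under
perturbation of the log-likelihood.  Φ and Φ^N satisfy the lower bound and local
upper bound uniformly in N, |Φ − Φ^N| ≤ exp(α₃‖u‖ + C)ψ(N) with ψ(N) → 0, and μ₀ is a
(κ, X^{s,q}) Besov prior with C^t ↪ X (constant c_e) and κ > 2 c_e r*(α₁ + 2α₃), so that
exp(α‖u‖_X) is μ₀-integrable for α < κ/(2 c_e r*).  Then d_Hell(μ, μ^N) ≤ C ψ(N). -/
theorem posterior_approximation_hellinger
    {X : Type*} [NormedAddCommGroup X] [MeasurableSpace X]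
    (μ0 : Measure X) [IsProbabilityMeasure μ0]
    (Φ : X → ℝ) (hΦmeas : Measurable Φ)
    (ΦN : ℕ → X → ℝ) (hΦNmeas : ∀ N, Measurable (ΦN N))
    (α₁ α₃ : ℝ) (hα₁ : 0 ≤ α₁) (hα₃ : 0 ≤ α₃)
    -- uniform lower bound (Assumption (i), uniformly in N)
    (M : ℝ) (hlow : ∀ u, M - α₁ * ‖u‖ ≤ Φ u) (hlowN : ∀ N u, M - α₁ * ‖u‖ ≤ ΦN N u)
    -- uniform local upper bound (Assumption (ii), uniformly in N)
    (K : ℝ → ℝ) (hupp : ∀ r : ℝ, ∀ u, ‖u‖ < r → Φ u ≤ K r)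
    (huppN : ∀ r : ℝ, ∀ N u, ‖u‖ < r → ΦN N u ≤ K r)
    -- approximation of the potential
    (C : ℝ) (ψ : ℕ → ℝ) (hψ0 : ∀ N, 0 ≤ ψ N) (hψ : Tendsto ψ atTop (nhds 0))
    (happ : ∀ N u, |Φ u - ΦN N u| ≤ Real.exp (α₃ * ‖u‖ + C) * ψ N)
    -- Besov prior: Fernique-like exponential integrability with constants c_e, r*
    (ce rstar κ : ℝ) (hce : 0 < ce) (hrstar : 0 < rstar)
    (hκ : 2 * ce * rstar * (α₁ + 2 * α₃) < κ)
    (hFer : ∀ α : ℝ, 0 < α → α < κ / (2 * ce * rstar) →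
      Integrable (fun u => Real.exp (α * ‖u‖)) μ0) :
    ∃ Ch : ℝ, ∀ N : ℕ,
      Real.sqrt ((1 / 2) * ∫ u,
        (Real.sqrt (Real.exp (-Φ u) / ∫ v, Real.exp (-Φ v) ∂μ0)
          - Real.sqrt (Real.exp (-ΦN N u) / ∫ v, Real.exp (-ΦN N v) ∂μ0)) ^ 2 ∂μ0)
      ≤ Ch * ψ N :=
  posterior_approximation_hellinger_general μ0 Φ hΦmeas ΦN hΦNmeas α₁ α₃ hα₁ hα₃ M hlow hlowN C ψ
    happ ce rstar κ hce hrstar hκ hFer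
end

section
/- Let ξ have density π(x) = c exp(-|x|/2) corresponding to q = 1 in dimension d, with radial tail P(|ξ| > ρ) = (c_d/c_0) ∑_{k=0}^d 2^{k+1} ρ^{d−k} (d choose k) e^{−ρ/2}. Then for all sufficiently large r, P(|ξ| > 2r) ≤ (P(|ξ| > r))². -/
/-!
By the binomial theorem the tail is in closed form,
`2^d ∑ₖ 2^(k+1) ρ^(d-k) (d choose k) e^(-ρ/2) = 2^(d+1) (ρ + 2)^d e^(-ρ/2)`.
Both `T(2ρ)` and `T(ρ)²` then carry the same exponential factor `e^(-ρ)`, and the inequality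
reduces to `(ρ + 1)^d ≤ 2 (ρ + 2)^(2d)`, which holds for every `ρ ≥ 0`.
-/

open Real Finset

theorem sum_pow_succ_mul_pow_mul_choose {R : Type*} [CommSemiring R] (a x : R) (d : ℕ) :
    ∑ k ∈ range (d + 1), a ^ (k + 1) * x ^ (d - k) * (d.choose k : R) = a * (x + a) ^ d := by
  rw [add_comm x a, add_pow, mul_sum]
  exact sum_congr rfl fun k _ => by ring

/-- `P(|ξ| > ρ)` for the density `c e^(-|x|/2)` on `ℝ^d`, with the normalisation `c_d / c_0 = 2^d`. -/
noncomputable def expRadialTail (d : ℕ) (ρ : ℝ) : ℝ :=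
  2 ^ d * ∑ k ∈ range (d + 1), (2 : ℝ) ^ (k + 1) * ρ ^ (d - k) * (d.choose k : ℝ) * exp (-ρ / 2)

theorem expRadialTail_eq (d : ℕ) (ρ : ℝ) :
    expRadialTail d ρ = 2 ^ (d + 1) * (ρ + 2) ^ d * exp (-ρ / 2) := by
  rw [expRadialTail, ← sum_mul, sum_pow_succ_mul_pow_mul_choose]
  ring

theorem expRadialTail_two_mul_le_sq (d : ℕ) {ρ : ℝ} (hρ : 0 ≤ ρ) :
    expRadialTail d (2 * ρ) ≤ expRadialTail d ρ ^ 2 := by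
  have hpoly : (ρ + 1) ^ d ≤ 2 * (ρ + 2) ^ (2 * d) :=
    calc (ρ + 1) ^ d ≤ (ρ + 2) ^ d := by gcongr; linarith
      _ ≤ (ρ + 2) ^ (2 * d) := pow_le_pow_right₀ (by linarith) (by omega)
      _ ≤ 2 * (ρ + 2) ^ (2 * d) := le_mul_of_one_le_left (by positivity) one_le_two
  have hexp : exp (-(2 * ρ) / 2) = exp (-ρ / 2) ^ 2 := by
    rw [← exp_nat_mul]; ring_nf
  rw [expRadialTail_eq, expRadialTail_eq, hexp]
  calc 2 ^ (d + 1) * (2 * ρ + 2) ^ d * exp (-ρ / 2) ^ 2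
      = 2 ^ (2 * d + 1) * (ρ + 1) ^ d * exp (-ρ / 2) ^ 2 := by
        rw [show 2 * ρ + 2 = 2 * (ρ + 1) by ring, mul_pow]; ring
    _ ≤ 2 ^ (2 * d + 1) * (2 * (ρ + 2) ^ (2 * d)) * exp (-ρ / 2) ^ 2 := by gcongr
    _ = (2 ^ (d + 1) * (ρ + 2) ^ d * exp (-ρ / 2)) ^ 2 := by ring

theorem tail_squaring_q_one_general
    (d : ℕ) :
    ∃ r₀ : ℝ, 0 < r₀ ∧ ∀ ρ : ℝ, r₀ ≤ ρ →
      (2 : ℝ) ^ d * ∑ k ∈ Finset.range (d + 1),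
          (2 : ℝ) ^ (k + 1) * (2 * ρ) ^ (d - k) * (d.choose k : ℝ) * Real.exp (-(2 * ρ) / 2)
      ≤ ((2 : ℝ) ^ d * ∑ k ∈ Finset.range (d + 1),
          (2 : ℝ) ^ (k + 1) * ρ ^ (d - k) * (d.choose k : ℝ) * Real.exp (-ρ / 2)) ^ 2 :=
  ⟨1, one_pos, fun _ hρ => expRadialTail_two_mul_le_sq d (by linarith)⟩

/-- q = 1 case of the tail-squaring inequality: with the explicit radial
tail T(ρ) = (c_d/c_0) ∑_{k=0}^d 2^{k+1} ρ^{d−k} (d choose k) e^{−ρ/2}, c_d/c_0 = 2^d,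
one has T(2r) ≤ (T r)² for all sufficiently large r. -/
theorem tail_squaring_q_one
    (d : ℕ) (hd : 1 ≤ d) :
    ∃ r₀ : ℝ, 0 < r₀ ∧ ∀ ρ : ℝ, r₀ ≤ ρ →
      (2 : ℝ) ^ d * ∑ k ∈ Finset.range (d + 1),
          (2 : ℝ) ^ (k + 1) * (2 * ρ) ^ (d - k) * (d.choose k : ℝ) * Real.exp (-(2 * ρ) / 2)
      ≤ ((2 : ℝ) ^ d * ∑ k ∈ Finset.range (d + 1),
          (2 : ℝ) ^ (k + 1) * ρ ^ (d - k) * (d.choose k : ℝ) * Real.exp (-ρ / 2)) ^ 2 :=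
  tail_squaring_q_one_general d
end
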